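/- arXiv:0910.2289 — 6 statements merged into one kernel-verified Lean document; each statement's English description precedes it below -/
import Mathlib

section
/- Let r ≥ 0 be an integer and m > -1/2 a real number. Let h : (0,∞) → ℂ be (r+1)-times continuously differentiable on (0,∞), and suppose there is ρ > 0 with h(x) = 0 for all x ≥ ρ. Then ∫₀^∞ x^{2m} |h^{(r)}(x)|² dx ≤ (m + 1/2)^{-2} ∫₀^∞ x^{2m+2} |h^{(r+1)}(x)|² dx, as an inequality of (possibly infinite) Lebesgue integrals of nonnegative functions. -/
/-! Differentiating `x ^ (2m+1) * ‖g x‖ ^ 2` and integrating over `[a, b]`, where `0 < a` and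
`g b = 0`, gives `(2m+1) ∫ x^(2m) ‖g‖² ≤ 2 ∫ x^(2m+1) ‖g‖ ‖g'‖`, because the boundary term
`-a^(2m+1) ‖g a‖²` is nonpositive. By Cauchy–Schwarz the right side is at most
`2 (∫ x^(2m) ‖g‖²)^(1/2) (∫ x^(2m+2) ‖g'‖²)^(1/2)`; on `[a, b]` the left integral is finite, so it
can be cancelled. Letting `a → 0` gives the inequality on the half line. -/

open MeasureTheory Set
open scoped ENNReal

section IteratedDeriv

variable {𝕜 E : Type*} [NontriviallyNormedField 𝕜] [NormedAddCommGroup E] [NormedSpace 𝕜 E]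
  {f : 𝕜 → E} {s t : Set 𝕜} {n : ℕ} {x : 𝕜}

theorem hasDerivAt_iteratedDerivWithin_of_isOpen (hf : ContDiffOn 𝕜 (n + 1 : ℕ∞) f s)
    (hs : IsOpen s) (hx : x ∈ s) :
    HasDerivAt (iteratedDerivWithin n f s) (iteratedDerivWithin (n + 1) f s x) x := by
  have hdiff : DifferentiableOn 𝕜 (iteratedDerivWithin n f s) s :=
    hf.differentiableOn_iteratedDerivWithin (by exact_mod_cast n.lt_succ_self) hs.uniqueDiffOn
  rw [iteratedDerivWithin_succ, derivWithin_of_isOpen hs hx]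
  exact (hdiff.differentiableAt (hs.mem_nhds hx)).hasDerivAt

theorem iteratedDerivWithin_eq_zero_of_eqOn_zero (hs : IsOpen s) (ht : IsOpen t)
    (hf : EqOn f 0 t) (hx : x ∈ s ∩ t) : iteratedDerivWithin n f s x = 0 := by
  rw [iteratedDerivWithin_congr_right_of_isOpen f n hs ht hx, iteratedDerivWithin_congr hf hx.2]
  simp [Pi.zero_def]

end IteratedDeriv

theorem lintegral_sq_le_of_le_mul_lintegral_mul {α : Type*} [MeasurableSpace α] {μ : Measure α}
    {f g : α → ℝ≥0∞} {C : ℝ≥0∞} (hf : AEMeasurable f μ) (hg : AEMeasurable g μ)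
    (hfin : ∫⁻ x, f x ^ 2 ∂μ ≠ ∞) (h : ∫⁻ x, f x ^ 2 ∂μ ≤ C * ∫⁻ x, f x * g x ∂μ) :
    ∫⁻ x, f x ^ 2 ∂μ ≤ C ^ 2 * ∫⁻ x, g x ^ 2 ∂μ := by
  set A := ∫⁻ x, f x ^ 2 ∂μ
  set B := ∫⁻ x, g x ^ 2 ∂μ
  have sq_sqrt : ∀ y : ℝ≥0∞, (y ^ (1 / 2 : ℝ)) ^ 2 = y := fun y => by
    rw [← ENNReal.rpow_natCast, ← ENNReal.rpow_mul]; norm_num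
  have holder : ∫⁻ x, f x * g x ∂μ ≤ A ^ (1 / 2 : ℝ) * B ^ (1 / 2 : ℝ) := by
    have := ENNReal.lintegral_mul_le_Lp_mul_Lq μ Real.HolderConjugate.two_two hf hg
    simpa only [ENNReal.rpow_two, Pi.mul_apply] using this
  obtain hA | hA := eq_or_ne (A ^ (1 / 2 : ℝ)) 0
  · rw [← sq_sqrt A, hA]; simp
  have hA_top : A ^ (1 / 2 : ℝ) ≠ ∞ := by simp [hfin]
  have key : A ^ (1 / 2 : ℝ) ≤ C * B ^ (1 / 2 : ℝ) := by
    rw [← ENNReal.mul_le_mul_iff_left hA hA_top, ← sq, sq_sqrt]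
    calc A ≤ C * (A ^ (1 / 2 : ℝ) * B ^ (1 / 2 : ℝ)) := h.trans (by gcongr)
      _ = C * B ^ (1 / 2 : ℝ) * A ^ (1 / 2 : ℝ) := by ring
  calc A = (A ^ (1 / 2 : ℝ)) ^ 2 := (sq_sqrt A).symm
    _ ≤ (C * B ^ (1 / 2 : ℝ)) ^ 2 := by gcongr
    _ = C ^ 2 * B := by rw [mul_pow, sq_sqrt]

section Hardy

variable {F : Type*} [NormedAddCommGroup F] [InnerProductSpace ℝ F] {g g' : ℝ → F} {m a b : ℝ}

theorem integral_rpow_mul_norm_sq_le (ha : 0 < a) (hab : a ≤ b)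
    (hderiv : ∀ x ∈ Icc a b, HasDerivAt g (g' x) x) (hcont : ContinuousOn g' (Icc a b))
    (hgb : g b = 0) :
    (2 * m + 1) * ∫ x in a..b, x ^ (2 * m) * ‖g x‖ ^ 2
      ≤ 2 * ∫ x in a..b, x ^ (2 * m + 1) * (‖g x‖ * ‖g' x‖) := by
  have hpos : ∀ x ∈ Icc a b, 0 < x := fun x hx => ha.trans_le hx.1
  have hg : ContinuousOn g (Icc a b) := fun x hx => (hderiv x hx).continuousAt.continuousWithinAt
  have hpow : ∀ p : ℝ, ContinuousOn (fun x : ℝ => x ^ p) (Icc a b) := fun p =>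
    continuousOn_id.rpow_const fun x hx => Or.inl (hpos x hx).ne'
  have hii {u : ℝ → ℝ} (hu : ContinuousOn u (Icc a b)) : IntervalIntegrable u volume a b :=
    hu.intervalIntegrable_of_Icc hab
  have hP : IntervalIntegrable (fun x => x ^ (2 * m) * ‖g x‖ ^ 2) volume a b :=
    hii ((hpow _).mul (hg.norm.pow 2))
  have hN : IntervalIntegrable (fun x => x ^ (2 * m + 1) * (‖g x‖ * ‖g' x‖)) volume a b :=
    hii ((hpow _).mul (hg.norm.mul hcont.norm))
  -- `D` is the derivative of `x ^ (2m+1) * ‖g x‖ ^ 2`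
  set D : ℝ → ℝ := fun x =>
    (2 * m + 1) * (x ^ (2 * m) * ‖g x‖ ^ 2) + 2 * (x ^ (2 * m + 1) * inner ℝ (g x) (g' x))
  have hDint : IntervalIntegrable D volume a b :=
    hii ((((hpow _).mul (hg.norm.pow 2)).const_smul (2 * m + 1)).add
      (((hpow _).mul (hg.inner hcont)).const_smul (2 : ℝ)))
  have hFTC : ∫ x in a..b, D x = -(a ^ (2 * m + 1) * ‖g a‖ ^ 2) := by
    rw [intervalIntegral.integral_eq_sub_of_hasDerivAt
      (f := fun x => x ^ (2 * m + 1) * ‖g x‖ ^ 2) ?_ ?_, hgb]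
    · simp
    · intro x hx
      rw [uIcc_of_le hab] at hx
      have hnorm : HasDerivAt (fun y => ‖g y‖ ^ 2) (2 * inner ℝ (g x) (g' x)) x :=
        (hderiv x hx).norm_sq
      have hp : HasDerivAt (fun y : ℝ => y ^ (2 * m + 1)) ((2 * m + 1) * x ^ (2 * m)) x := by
        convert Real.hasDerivAt_rpow_const (p := 2 * m + 1) (Or.inl (hpos x hx).ne') using 2
        ring_nf
      exact (hp.mul hnorm).congr_deriv (by ring)
    · exact hDint
  have hDle : ∀ x ∈ Icc a b,
      (2 * m + 1) * (x ^ (2 * m) * ‖g x‖ ^ 2) - 2 * (x ^ (2 * m + 1) * (‖g x‖ * ‖g' x‖)) ≤ D x := by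
    intro x hx
    have hinner := neg_le_of_abs_le (abs_real_inner_le_norm (g x) (g' x))
    have hxp := Real.rpow_nonneg (hpos x hx).le (2 * m + 1)
    simp only [D]
    linarith [mul_le_mul_of_nonneg_left hinner hxp]
  have hmono :=
    intervalIntegral.integral_mono_on hab ((hP.const_mul _).sub (hN.const_mul _)) hDint hDle
  rw [intervalIntegral.integral_sub (hP.const_mul _) (hN.const_mul _),
    intervalIntegral.integral_const_mul, intervalIntegral.integral_const_mul, hFTC] at hmono
  have hboundary := mul_nonneg (Real.rpow_nonneg ha.le (2 * m + 1)) (sq_nonneg ‖g a‖)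
  linarith

theorem ofReal_setIntegral_Ioc_of_continuousOn {u : ℝ → ℝ} (hu : ContinuousOn u (Icc a b))
    (hnn : ∀ x ∈ Ioc a b, 0 ≤ u x) :
    ENNReal.ofReal (∫ x in Ioc a b, u x) = ∫⁻ x in Ioc a b, ENNReal.ofReal (u x) :=
  ofReal_integral_eq_lintegral_ofReal (hu.integrableOn_Icc.mono_set Ioc_subset_Icc_self)
    (ae_restrict_of_forall_mem measurableSet_Ioc hnn)

theorem lintegral_Ioc_rpow_mul_norm_sq_le (hm : -1 / 2 < m) (ha : 0 < a) (hab : a ≤ b)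
    (hderiv : ∀ x ∈ Icc a b, HasDerivAt g (g' x) x) (hcont : ContinuousOn g' (Icc a b))
    (hgb : g b = 0) :
    ∫⁻ x in Ioc a b, ENNReal.ofReal (x ^ (2 * m) * ‖g x‖ ^ 2)
      ≤ ENNReal.ofReal (((m + 1 / 2) ^ 2)⁻¹) *
        ∫⁻ x in Ioc a b, ENNReal.ofReal (x ^ (2 * m + 2) * ‖g' x‖ ^ 2) := by
  have hpos : ∀ x ∈ Icc a b, 0 < x := fun x hx => ha.trans_le hx.1
  have hg : ContinuousOn g (Icc a b) := fun x hx => (hderiv x hx).continuousAt.continuousWithinAt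
  have hpow : ∀ p : ℝ, ContinuousOn (fun x : ℝ => x ^ p) (Icc a b) := fun p =>
    continuousOn_id.rpow_const fun x hx => Or.inl (hpos x hx).ne'
  have hpow_nonneg {p x : ℝ} (hx : x ∈ Ioc a b) : 0 ≤ x ^ p :=
    Real.rpow_nonneg (hpos x (Ioc_subset_Icc_self hx)).le p
  have hc : 0 < 2 * m + 1 := by linarith
  set u : ℝ → ℝ≥0∞ := fun x => ENNReal.ofReal (x ^ m * ‖g x‖)
  set v : ℝ → ℝ≥0∞ := fun x => ENNReal.ofReal (x ^ (m + 1) * ‖g' x‖)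
  have hsq {p : ℝ} {y : F} {x : ℝ} (hx : x ∈ Ioc a b) :
      ENNReal.ofReal (x ^ (2 * p) * ‖y‖ ^ 2) = ENNReal.ofReal (x ^ p * ‖y‖) ^ 2 := by
    have hx0 := hpos x (Ioc_subset_Icc_self hx)
    rw [← ENNReal.ofReal_pow (by positivity), mul_pow, ← Real.rpow_mul_natCast hx0.le,
      Nat.cast_ofNat, mul_comm p]
  have huv : ∀ x ∈ Ioc a b, u x * v x = ENNReal.ofReal (x ^ (2 * m + 1) * (‖g x‖ * ‖g' x‖)) := by
    intro x hx
    have hx0 := hpos x (Ioc_subset_Icc_self hx)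
    rw [← ENNReal.ofReal_mul (by positivity), show 2 * m + 1 = m + (m + 1) by ring,
      Real.rpow_add hx0 m (m + 1)]
    congr 1
    ring
  have hmeas {w : ℝ → ℝ} (hw : ContinuousOn w (Icc a b)) :
      AEMeasurable (fun x => ENNReal.ofReal (w x)) (volume.restrict (Ioc a b)) :=
    (ENNReal.continuous_ofReal.comp_continuousOn (hw.mono Ioc_subset_Icc_self)).aemeasurable
      measurableSet_Ioc
  rw [show 2 * m + 2 = 2 * (m + 1) by ring,
    setLIntegral_congr_fun measurableSet_Ioc fun x hx => hsq hx,
    setLIntegral_congr_fun measurableSet_Ioc fun x hx => hsq (p := m + 1) hx]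
  have hA : ∫⁻ x in Ioc a b, u x ^ 2
      = ENNReal.ofReal (∫ x in Ioc a b, x ^ (2 * m) * ‖g x‖ ^ 2) := by
    rw [ofReal_setIntegral_Ioc_of_continuousOn (u := fun x => x ^ (2 * m) * ‖g x‖ ^ 2)
      ((hpow _).mul (hg.norm.pow 2)) fun x hx => mul_nonneg (hpow_nonneg hx) (by positivity)]
    exact setLIntegral_congr_fun measurableSet_Ioc fun x hx => (hsq hx).symm
  have hN : ∫⁻ x in Ioc a b, u x * v x
      = ENNReal.ofReal (∫ x in Ioc a b, x ^ (2 * m + 1) * (‖g x‖ * ‖g' x‖)) := by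
    rw [ofReal_setIntegral_Ioc_of_continuousOn
      (u := fun x => x ^ (2 * m + 1) * (‖g x‖ * ‖g' x‖)) ((hpow _).mul (hg.norm.mul hcont.norm))
      fun x hx => mul_nonneg (hpow_nonneg hx) (by positivity)]
    exact setLIntegral_congr_fun measurableSet_Ioc huv
  have hC : ENNReal.ofReal (((m + 1 / 2) ^ 2)⁻¹) = ENNReal.ofReal (2 / (2 * m + 1)) ^ 2 := by
    rw [← ENNReal.ofReal_pow (div_pos two_pos hc).le]
    congr 1
    field_simp
  rw [hC]
  refine lintegral_sq_le_of_le_mul_lintegral_mul (hmeas ((hpow _).mul hg.norm))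
    (hmeas ((hpow _).mul hcont.norm)) (hA ▸ ENNReal.ofReal_ne_top) ?_
  rw [hA, hN, ← ENNReal.ofReal_mul (div_pos two_pos hc).le]
  refine ENNReal.ofReal_le_ofReal ?_
  have henergy := integral_rpow_mul_norm_sq_le (m := m) ha hab hderiv hcont hgb
  rw [intervalIntegral.integral_of_le hab, intervalIntegral.integral_of_le hab] at henergy
  rw [div_mul_eq_mul_div, le_div_iff₀ hc]
  linarith

end Hardy

theorem setLIntegral_Ioi_le_of_forall_lt {f : ℝ → ℝ≥0∞} {a : ℝ} {c : ℝ≥0∞}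
    (h : ∀ ε, a < ε → ∫⁻ x in Ioi ε, f x ≤ c) : ∫⁻ x in Ioi a, f x ≤ c := by
  have hunion : ⋃ n : ℕ, Ioi (a + 1 / (n + 1)) = Ioi a := by
    ext x
    simp only [mem_iUnion, mem_Ioi]
    refine ⟨fun ⟨n, hn⟩ => lt_trans (by simp; positivity) hn, fun hx => ?_⟩
    obtain ⟨n, hn⟩ := exists_nat_one_div_lt (sub_pos.2 hx)
    exact ⟨n, by linarith⟩
  have hmono : Monotone fun n : ℕ => Ioi (a + 1 / (n + 1 : ℝ)) := fun i j hij =>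
    Ioi_subset_Ioi (by gcongr)
  rw [← hunion, setLIntegral_iUnion_of_directed _ hmono.directed_le]
  exact iSup_le fun n => h _ (by simp; positivity)

theorem setLIntegral_Ioi_eq_Ioc {f : ℝ → ℝ≥0∞} {a b : ℝ} (hab : a ≤ b)
    (hf : ∀ x, b < x → f x = 0) : ∫⁻ x in Ioi a, f x = ∫⁻ x in Ioc a b, f x := by
  rw [← Ioc_union_Ioi_eq_Ioi hab, lintegral_union measurableSet_Ioi (Ioc_disjoint_Ioi le_rfl),
    setLIntegral_congr_fun measurableSet_Ioi hf, lintegral_zero, add_zero]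

/-- Lemma 2.4(a): weighted Hardy inequality on the half line. -/
theorem weighted_hardy_inequality
    (r : ℕ) (m : ℝ) (hm : -1/2 < m) (h : ℝ → ℂ)
    (hsmooth : ContDiffOn ℝ (r + 1 : ℕ∞) h (Set.Ioi 0))
    (ρ : ℝ) (hρ : 0 < ρ) (hvanish : ∀ x, ρ ≤ x → h x = 0) :
    ∫⁻ x in Set.Ioi (0:ℝ),
        ENNReal.ofReal (x ^ (2*m) * ‖iteratedDerivWithin r h (Set.Ioi 0) x‖^2)
      ≤ ENNReal.ofReal (((m + 1/2)^2)⁻¹) *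
        ∫⁻ x in Set.Ioi (0:ℝ),
          ENNReal.ofReal (x ^ (2*m + 2) * ‖iteratedDerivWithin (r+1) h (Set.Ioi 0) x‖^2) := by
  set g := iteratedDerivWithin r h (Ioi 0)
  set g' := iteratedDerivWithin (r + 1) h (Ioi 0)
  have hderiv : ∀ x ∈ Ioi (0 : ℝ), HasDerivAt g (g' x) x := fun x hx =>
    hasDerivAt_iteratedDerivWithin_of_isOpen hsmooth isOpen_Ioi hx
  have hcont : ContinuousOn g' (Ioi 0) :=
    hsmooth.continuousOn_iteratedDerivWithin le_rfl (uniqueDiffOn_Ioi 0)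
  have hg_vanish : ∀ x, ρ < x → g x = 0 := fun x hx =>
    iteratedDerivWithin_eq_zero_of_eqOn_zero isOpen_Ioi isOpen_Ioi
      (fun y hy => hvanish y hy.le) ⟨hρ.trans hx, hx⟩
  refine setLIntegral_Ioi_le_of_forall_lt fun ε hε => ?_
  have hsub : Icc ε (ε + ρ) ⊆ Ioi 0 := fun x hx => hε.trans_le hx.1
  calc ∫⁻ x in Ioi ε, ENNReal.ofReal (x ^ (2 * m) * ‖g x‖ ^ 2)
      = ∫⁻ x in Ioc ε (ε + ρ), ENNReal.ofReal (x ^ (2 * m) * ‖g x‖ ^ 2) :=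
        setLIntegral_Ioi_eq_Ioc (by linarith) fun x hx => by
          simp [hg_vanish x (by linarith)]
    _ ≤ ENNReal.ofReal (((m + 1 / 2) ^ 2)⁻¹) *
          ∫⁻ x in Ioc ε (ε + ρ), ENNReal.ofReal (x ^ (2 * m + 2) * ‖g' x‖ ^ 2) :=
        lintegral_Ioc_rpow_mul_norm_sq_le hm hε (by linarith) (fun x hx => hderiv x (hsub hx))
          (hcont.mono hsub) (hg_vanish _ (by linarith))
    _ ≤ _ := by
        gcongr
        exact Ioc_subset_Ioi_self.trans (Ioi_subset_Ioi hε.le)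
end

section
/- Let r ≥ 0 be an integer and p ≥ 0, m > r − 1/2 real numbers. There exists a constant C ≥ 1, depending only on m, p and r, such that for every function h : (0,∞) → ℂ that is r-times continuously differentiable on (0,∞) and vanishes for all sufficiently large x, one has C^{-1} ‖x^m (x^p h)^{(r)}‖ ≤ ‖x^{m+p} h^{(r)}‖ ≤ C ‖x^m (x^p h)^{(r)}‖, where both inequalities are understood in [0,∞] (so in particular one side is finite if and only if the other is). -/
/-!
By Leibniz's rule, `x^m (x^p h)^{(r)}` is a linear combination of the functions
`x^{m+p-k} h^{(r-k)}`, `k ≤ r`. Each of them is controlled by `‖x^{m+p} h^{(r)}‖` through `k`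
applications of Hardy's inequality `‖x^s g‖ ≤ (s + 1/2)⁻¹ ‖x^{s+1} g'‖`, valid for `s > -1/2` and
`g` vanishing at infinity; here `s = m + p - k + j ≥ m - r > -1/2`. The reverse bound is the same
estimate applied to `x^p h` with `p` replaced by `-p`. Hardy's inequality itself follows from
`|g(x)| ≤ ∫_x^∞ |g'|`, Cauchy–Schwarz against the weight `t^{-s-3/2}` on `(x, ∞)`, and Tonelli.
-/

open MeasureTheory Set Filter
open scoped ENNReal NNReal

theorem sq_lintegral_mul_le {α : Type*} [MeasurableSpace α] {μ : Measure α} {f g : α → ℝ≥0∞}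
    (hf : AEMeasurable f μ) (hg : AEMeasurable g μ) :
    (∫⁻ a, f a * g a ∂μ) ^ 2 ≤ (∫⁻ a, f a ^ 2 ∂μ) * ∫⁻ a, g a ^ 2 ∂μ := by
  have h := ENNReal.lintegral_mul_le_Lp_mul_Lq μ Real.HolderConjugate.two_two hf hg
  simp only [ENNReal.rpow_two, Pi.mul_apply] at h
  calc (∫⁻ a, f a * g a ∂μ) ^ 2
      ≤ ((∫⁻ a, f a ^ 2 ∂μ) ^ (1 / 2 : ℝ) * (∫⁻ a, g a ^ 2 ∂μ) ^ (1 / 2 : ℝ)) ^ 2 := by gcongr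
    _ = _ := by
      rw [mul_pow, ← ENNReal.rpow_natCast, ← ENNReal.rpow_natCast, ← ENNReal.rpow_mul,
        ← ENNReal.rpow_mul]
      norm_num

theorem ofReal_rpow_sq {t : ℝ} (ht : 0 ≤ t) (a : ℝ) :
    ENNReal.ofReal (t ^ a) ^ 2 = ENNReal.ofReal (t ^ (2 * a)) := by
  rw [← ENNReal.ofReal_pow (by positivity), mul_comm, Real.rpow_mul ht, Real.rpow_two]

theorem ofReal_rpow_mul_ofReal_rpow {t : ℝ} (ht : 0 < t) (a b : ℝ) :
    ENNReal.ofReal (t ^ a) * ENNReal.ofReal (t ^ b) = ENNReal.ofReal (t ^ (a + b)) := by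
  rw [← ENNReal.ofReal_mul (by positivity), Real.rpow_add ht]

theorem lintegral_Ioo_zero_rpow {a : ℝ} (ha : -1 < a) {t : ℝ} (ht : 0 ≤ t) :
    ∫⁻ x in Ioo 0 t, ENNReal.ofReal (x ^ a) = ENNReal.ofReal (t ^ (a + 1) / (a + 1)) := by
  have hint : IntegrableOn (fun x : ℝ => x ^ a) (Ioc 0 t) := by
    rw [← intervalIntegrable_iff_integrableOn_Ioc_of_le ht]
    exact intervalIntegral.intervalIntegrable_rpow' ha
  rw [Measure.restrict_congr_set Ioo_ae_eq_Ioc, ← ofReal_integral_eq_lintegral_ofReal hint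
    ((ae_restrict_iff' measurableSet_Ioc).2 (.of_forall fun x hx => Real.rpow_nonneg hx.1.le a)),
    ← intervalIntegral.integral_of_le ht, integral_rpow (.inl ha),
    Real.zero_rpow (by linarith), sub_zero]

theorem lintegral_Ioi_rpow {a : ℝ} (ha : a < -1) {x : ℝ} (hx : 0 < x) :
    ∫⁻ t in Ioi x, ENNReal.ofReal (t ^ a) = ENNReal.ofReal (-x ^ (a + 1) / (a + 1)) := by
  rw [← ofReal_integral_eq_lintegral_ofReal (integrableOn_Ioi_rpow_of_lt ha hx)
      ((ae_restrict_iff' measurableSet_Ioi).2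
        (.of_forall fun t ht => Real.rpow_nonneg (hx.trans ht).le a)),
    integral_Ioi_rpow_of_lt ha hx]

theorem sq_lintegral_Ioi_le {b : ℝ} (hb : 1 < b) {x : ℝ} (hx : 0 < x) {F : ℝ → ℝ≥0∞}
    (hF : Measurable F) :
    (∫⁻ t in Ioi x, F t) ^ 2
      ≤ ENNReal.ofReal (x ^ (1 - b) / (b - 1))
          * ∫⁻ t in Ioi x, ENNReal.ofReal (t ^ b) * F t ^ 2 := by
  have hsplit : ∀ t ∈ Ioi x,
      F t = ENNReal.ofReal (t ^ (-b / 2)) * (ENNReal.ofReal (t ^ (b / 2)) * F t) := by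
    intro t ht
    rw [← mul_assoc, ofReal_rpow_mul_ofReal_rpow (hx.trans ht), neg_div, neg_add_cancel,
      Real.rpow_zero, ENNReal.ofReal_one, one_mul]
  have hweight : ∫⁻ t in Ioi x, ENNReal.ofReal (t ^ (-b / 2)) ^ 2
      = ENNReal.ofReal (x ^ (1 - b) / (b - 1)) := by
    rw [setLIntegral_congr_fun measurableSet_Ioi
      fun t ht => ofReal_rpow_sq (hx.trans ht).le (-b / 2), lintegral_Ioi_rpow (by linarith) hx]
    congr 1
    rw [show 2 * (-b / 2) + 1 = -(b - 1) by ring, show 1 - b = -(b - 1) by ring, div_neg, neg_div,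
      neg_neg]
  rw [setLIntegral_congr_fun measurableSet_Ioi hsplit]
  refine (sq_lintegral_mul_le (by fun_prop) (by fun_prop)).trans_eq ?_
  rw [hweight]
  congr 1
  refine setLIntegral_congr_fun measurableSet_Ioi fun t ht => ?_
  rw [mul_pow, ofReal_rpow_sq (hx.trans ht).le, mul_div_cancel₀ _ two_ne_zero]

theorem lintegral_rpow_mul_lintegral_Ioi {a : ℝ} (ha : -1 < a) {G : ℝ → ℝ≥0∞}
    (hG : Measurable G) :
    ∫⁻ x in Ioi 0, ENNReal.ofReal (x ^ a) * ∫⁻ t in Ioi x, G t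
      = ∫⁻ t in Ioi 0, ENNReal.ofReal (t ^ (a + 1) / (a + 1)) * G t := by
  let K : ℝ → ℝ → ℝ≥0∞ := fun x t => if x < t then ENNReal.ofReal (x ^ a) * G t else 0
  have hK : Measurable (Function.uncurry K) :=
    Measurable.ite (measurableSet_lt measurable_fst measurable_snd) (by fun_prop) measurable_const
  calc ∫⁻ x in Ioi 0, ENNReal.ofReal (x ^ a) * ∫⁻ t in Ioi x, G t
      = ∫⁻ x in Ioi 0, ∫⁻ t in Ioi 0, K x t := by
        refine setLIntegral_congr_fun measurableSet_Ioi fun x hx => ?_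
        have hKx : K x = (Ioi x).indicator fun t => ENNReal.ofReal (x ^ a) * G t := by
          ext t; simp [K, indicator_apply]
        rw [hKx, lintegral_indicator measurableSet_Ioi, Measure.restrict_restrict measurableSet_Ioi,
          inter_eq_left.2 (Ioi_subset_Ioi (le_of_lt hx)), lintegral_const_mul _ hG]
    _ = ∫⁻ t in Ioi 0, ∫⁻ x in Ioi 0, K x t := lintegral_lintegral_swap hK.aemeasurable
    _ = ∫⁻ t in Ioi 0, ENNReal.ofReal (t ^ (a + 1) / (a + 1)) * G t := by
        refine setLIntegral_congr_fun measurableSet_Ioi fun t ht => ?_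
        have hKt : (fun x => K x t)
            = fun x => (Iio t).indicator (fun x => ENNReal.ofReal (x ^ a)) x * G t := by
          ext x; by_cases hxt : x < t <;> simp [K, hxt]
        have hw : Measurable fun x : ℝ => ENNReal.ofReal (x ^ a) := by fun_prop
        rw [hKt, lintegral_mul_const _ (hw.indicator measurableSet_Iio),
          lintegral_indicator measurableSet_Iio, Measure.restrict_restrict measurableSet_Iio,
          Iio_inter_Ioi, lintegral_Ioo_zero_rpow ha (le_of_lt ht)]

theorem lintegral_rpow_mul_sq_lintegral_Ioi_le {s : ℝ} (hs : -(1 / 2) < s) {F : ℝ → ℝ≥0∞}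
    (hF : Measurable F) :
    ∫⁻ x in Ioi 0, ENNReal.ofReal (x ^ (2 * s)) * (∫⁻ t in Ioi x, F t) ^ 2
      ≤ ENNReal.ofReal (s + 1 / 2)⁻¹ ^ 2
          * ∫⁻ t in Ioi 0, ENNReal.ofReal (t ^ (2 * (s + 1))) * F t ^ 2 := by
  have hε : 0 < s + 1 / 2 := by linarith
  set G : ℝ → ℝ≥0∞ := fun t => ENNReal.ofReal (t ^ (s + 3 / 2)) * F t ^ 2
  calc ∫⁻ x in Ioi 0, ENNReal.ofReal (x ^ (2 * s)) * (∫⁻ t in Ioi x, F t) ^ 2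
      ≤ ∫⁻ x in Ioi 0, ENNReal.ofReal (x ^ (2 * s)) *
          (ENNReal.ofReal (x ^ (1 - (s + 3 / 2)) / (s + 3 / 2 - 1)) * ∫⁻ t in Ioi x, G t) := by
        refine setLIntegral_mono' measurableSet_Ioi fun x hx => ?_
        gcongr
        exact sq_lintegral_Ioi_le (by linarith) hx hF
    _ = ∫⁻ x in Ioi 0, ENNReal.ofReal (s + 1 / 2)⁻¹ *
          (ENNReal.ofReal (x ^ (s - 1 / 2)) * ∫⁻ t in Ioi x, G t) := by
        refine setLIntegral_congr_fun measurableSet_Ioi fun x hx => ?_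
        have hx : 0 < x := hx
        rw [← mul_assoc, ← mul_assoc, ← ENNReal.ofReal_mul (by positivity),
          ← ENNReal.ofReal_mul (by positivity)]
        congr 2
        rw [show s - 1 / 2 = 2 * s + (1 - (s + 3 / 2)) by ring, Real.rpow_add hx]
        ring_nf
    _ = ENNReal.ofReal (s + 1 / 2)⁻¹ ^ 2
          * ∫⁻ t in Ioi 0, ENNReal.ofReal (t ^ (2 * (s + 1))) * F t ^ 2 := by
        rw [lintegral_const_mul' _ _ ENNReal.ofReal_ne_top,
          lintegral_rpow_mul_lintegral_Ioi (by linarith) (by fun_prop), sq, mul_assoc]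
        congr 1
        rw [← lintegral_const_mul' _ _ ENNReal.ofReal_ne_top]
        refine setLIntegral_congr_fun measurableSet_Ioi fun t ht => ?_
        have ht : 0 < t := ht
        rw [show s - 1 / 2 + 1 = s + 1 / 2 by ring, ← mul_assoc, ← mul_assoc,
          ← ENNReal.ofReal_mul (by positivity), ← ENNReal.ofReal_mul (by positivity)]
        congr 2
        rw [show 2 * (s + 1) = s + 1 / 2 + (s + 3 / 2) by ring, Real.rpow_add ht (s + 1 / 2)]
        ring

section

variable {E : Type*} [NormedAddCommGroup E] [NormedSpace ℝ E]

theorem iteratedDeriv_eventuallyEq_zero {f : ℝ → E} (hf : f =ᶠ[atTop] 0) (n : ℕ) :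
    iteratedDeriv n f =ᶠ[atTop] 0 := by
  obtain ⟨ρ, hρ⟩ := eventually_atTop.1 hf
  filter_upwards [eventually_gt_atTop ρ] with x hx
  have hEq : EqOn f 0 (Ioi ρ) := fun y hy => hρ y (le_of_lt hy)
  simpa using hEq.iteratedDeriv_of_isOpen isOpen_Ioi n hx

theorem enorm_le_lintegral_Ioi_enorm_deriv [CompleteSpace E] {f : ℝ → E}
    (hf : ContDiffOn ℝ 1 f (Ioi 0)) (hf0 : f =ᶠ[atTop] 0) {x : ℝ} (hx : 0 < x) :
    ‖f x‖ₑ ≤ ∫⁻ t in Ioi x, ‖deriv f t‖ₑ := by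
  obtain ⟨b, hb, hxb⟩ := (hf0.and (eventually_ge_atTop x)).exists
  have hsub : Icc x b ⊆ Ioi 0 := fun t ht => hx.trans_le ht.1
  have hderiv : ∀ t ∈ Ioi (0 : ℝ), HasDerivAt f (deriv f t) t := fun t ht =>
    ((hf.differentiableOn one_ne_zero t ht).differentiableAt (Ioi_mem_nhds ht)).hasDerivAt
  have hftc : ∫ t in x..b, deriv f t = f b - f x :=
    intervalIntegral.integral_eq_sub_of_hasDerivAt
      (fun t ht => hderiv t (hsub (uIcc_of_le hxb ▸ ht)))
      (((hf.continuousOn_deriv_of_isOpen isOpen_Ioi le_rfl).mono hsub).intervalIntegrable_of_Icc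
        hxb)
  calc ‖f x‖ₑ = ‖∫ t in Ioc x b, deriv f t‖ₑ := by
        rw [← intervalIntegral.integral_of_le hxb, hftc, hb, Pi.zero_apply, zero_sub, enorm_neg]
    _ ≤ ∫⁻ t in Ioc x b, ‖deriv f t‖ₑ := enorm_integral_le_lintegral_enorm _
    _ ≤ ∫⁻ t in Ioi x, ‖deriv f t‖ₑ := lintegral_mono_set Ioc_subset_Ioi_self

end

theorem ContDiffOn.iteratedDeriv_of_isOpen {𝕜 F : Type*} [NontriviallyNormedField 𝕜]
    [NormedAddCommGroup F] [NormedSpace 𝕜 F] {f : 𝕜 → F} {s : Set 𝕜} {n k m : ℕ}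
    (hf : ContDiffOn 𝕜 n f s) (hs : IsOpen s) (hkm : k + m ≤ n) :
    ContDiffOn 𝕜 m (iteratedDeriv k f) s := by
  induction k generalizing f n with
  | zero => exact hf.of_le (by exact_mod_cast (by omega : m ≤ n))
  | succ k ih =>
    rw [iteratedDeriv_succ']
    exact ih (n := n - 1) (hf.deriv_of_isOpen hs (by norm_cast; omega)) (by omega)

theorem contDiffOn_ofReal_rpow (q : ℝ) (n : WithTop ℕ∞) :
    ContDiffOn ℝ n (fun y : ℝ => ((y ^ q : ℝ) : ℂ)) (Ioi 0) := fun x hx =>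
  (Complex.ofRealCLM.contDiff.comp_contDiffAt x
    (Real.contDiffAt_rpow_const_of_ne (ne_of_gt hx))).contDiffWithinAt

theorem iteratedDeriv_ofReal_rpow (q : ℝ) (n : ℕ) {x : ℝ} (hx : 0 < x) :
    iteratedDeriv n (fun y : ℝ => ((y ^ q : ℝ) : ℂ)) x
      = ((descPochhammer ℝ n).eval q * x ^ (q - n) : ℝ) := by
  have h := Complex.ofRealCLM.iteratedFDeriv_comp_left
    (Real.contDiffAt_rpow_const_of_ne (p := q) (n := n) hx.ne') le_rfl
  rw [iteratedDeriv_eq_iteratedFDeriv, ← Real.iter_deriv_rpow_const, ← iteratedDeriv_eq_iterate,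
    iteratedDeriv_eq_iteratedFDeriv]
  exact congrArg (fun L => L fun _ => (1 : ℝ)) h

theorem iteratedDeriv_ofReal_rpow_mul {f : ℝ → ℂ} {r : ℕ} (hf : ContDiffOn ℝ r f (Ioi 0))
    (q : ℝ) :
    EqOn (iteratedDeriv r (fun y => ((y ^ q : ℝ) : ℂ) * f y))
      (∑ i ∈ Finset.range (r + 1), (r.choose i * (descPochhammer ℝ i).eval q : ℂ) •
        fun x => ((x ^ (q - i) : ℝ) : ℂ) * iteratedDeriv (r - i) f x) (Ioi 0) := by
  intro x hx
  rw [show (fun y => ((y ^ q : ℝ) : ℂ) * f y) = (fun y : ℝ => ((y ^ q : ℝ) : ℂ)) * f from rfl,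
    iteratedDeriv_mul ((contDiffOn_ofReal_rpow q r).contDiffAt (Ioi_mem_nhds hx))
      (hf.contDiffAt (Ioi_mem_nhds hx)), Finset.sum_apply]
  refine Finset.sum_congr rfl fun i _ => ?_
  rw [iteratedDeriv_ofReal_rpow q i hx, Pi.smul_apply, smul_eq_mul]
  push_cast
  ring

theorem ofReal_mul_norm_sq {E : Type*} [SeminormedAddCommGroup E] {c : ℝ} (hc : 0 ≤ c) (z : E) :
    ENNReal.ofReal (c * ‖z‖ ^ 2) = ENNReal.ofReal c * ‖z‖ₑ ^ 2 := by
  rw [ENNReal.ofReal_mul hc, ENNReal.ofReal_pow (norm_nonneg z), ofReal_norm]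

noncomputable def weightedL2Norm (s : ℝ) (u : ℝ → ℂ) : ℝ≥0∞ :=
  eLpNorm (fun x => ((x ^ s : ℝ) : ℂ) * u x) 2 (volume.restrict (Ioi 0))

theorem weightedL2Norm_eq_lintegral (s : ℝ) (u : ℝ → ℂ) :
    weightedL2Norm s u
      = (∫⁻ x in Ioi (0 : ℝ), ENNReal.ofReal (x ^ (2 * s) * ‖u x‖ ^ 2)) ^ (1 / 2 : ℝ) := by
  rw [weightedL2Norm, eLpNorm_eq_lintegral_rpow_enorm_toReal two_ne_zero ENNReal.ofNat_ne_top]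
  simp only [ENNReal.toReal_ofNat, ENNReal.rpow_two]
  congr 1
  refine setLIntegral_congr_fun measurableSet_Ioi fun x hx => ?_
  rw [ofReal_mul_norm_sq (Real.rpow_nonneg (le_of_lt hx) _), enorm_mul, mul_pow,
    ← ofReal_rpow_sq (le_of_lt hx), ← ofReal_norm, Complex.norm_real,
    Real.norm_of_nonneg (Real.rpow_nonneg (le_of_lt hx) _)]

theorem weightedL2Norm_congr (s : ℝ) {u v : ℝ → ℂ} (h : EqOn u v (Ioi 0)) :
    weightedL2Norm s u = weightedL2Norm s v := by
  simp only [weightedL2Norm_eq_lintegral]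
  congr 1
  exact setLIntegral_congr_fun measurableSet_Ioi fun x hx => by rw [h hx]

theorem weightedL2Norm_rpow_mul (s a : ℝ) (u : ℝ → ℂ) :
    weightedL2Norm s (fun x => ((x ^ a : ℝ) : ℂ) * u x) = weightedL2Norm (s + a) u := by
  refine eLpNorm_congr_ae ((ae_restrict_iff' measurableSet_Ioi).2 (.of_forall fun x hx => ?_))
  simp only
  rw [Real.rpow_add hx, Complex.ofReal_mul, mul_assoc]

theorem weightedL2Norm_const_smul (s : ℝ) (c : ℂ) (u : ℝ → ℂ) :
    weightedL2Norm s (c • u) = ‖c‖ₑ * weightedL2Norm s u := by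
  rw [weightedL2Norm, weightedL2Norm, ← eLpNorm_const_smul]
  congr 1
  ext x
  simp only [Pi.smul_apply, smul_eq_mul]
  ring

theorem weightedL2Norm_sum_le (s : ℝ) {ι : Type*} (t : Finset ι) {u : ι → ℝ → ℂ}
    (hu : ∀ i ∈ t, AEStronglyMeasurable (u i) (volume.restrict (Ioi 0))) :
    weightedL2Norm s (∑ i ∈ t, u i) ≤ ∑ i ∈ t, weightedL2Norm s (u i) := by
  have hw : AEStronglyMeasurable (fun x : ℝ => ((x ^ s : ℝ) : ℂ)) (volume.restrict (Ioi 0)) :=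
    (by fun_prop : Measurable fun x : ℝ => ((x ^ s : ℝ) : ℂ)).aestronglyMeasurable
  refine le_of_eq_of_le ?_ (eLpNorm_sum_le (fun i hi => hw.mul (hu i hi)) one_le_two)
  rw [weightedL2Norm]
  congr 1
  ext x
  simp [Finset.mul_sum]

theorem weightedL2Norm_le_mul_weightedL2Norm_deriv {s : ℝ} (hs : -(1 / 2) < s) {f : ℝ → ℂ}
    (hf : ContDiffOn ℝ 1 f (Ioi 0)) (hf0 : f =ᶠ[atTop] 0) :
    weightedL2Norm s f ≤ ENNReal.ofReal (s + 1 / 2)⁻¹ * weightedL2Norm (s + 1) (deriv f) := by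
  rw [weightedL2Norm_eq_lintegral, weightedL2Norm_eq_lintegral]
  have hsq : ∫⁻ x in Ioi (0 : ℝ), ENNReal.ofReal (x ^ (2 * s) * ‖f x‖ ^ 2)
      ≤ ENNReal.ofReal (s + 1 / 2)⁻¹ ^ 2
          * ∫⁻ t in Ioi (0 : ℝ), ENNReal.ofReal (t ^ (2 * (s + 1)) * ‖deriv f t‖ ^ 2) := by
    calc ∫⁻ x in Ioi (0 : ℝ), ENNReal.ofReal (x ^ (2 * s) * ‖f x‖ ^ 2)
        ≤ ∫⁻ x in Ioi 0, ENNReal.ofReal (x ^ (2 * s)) * (∫⁻ t in Ioi x, ‖deriv f t‖ₑ) ^ 2 := by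
          refine setLIntegral_mono' measurableSet_Ioi fun x hx => ?_
          rw [ofReal_mul_norm_sq (Real.rpow_nonneg (le_of_lt hx) _)]
          gcongr
          exact enorm_le_lintegral_Ioi_enorm_deriv hf hf0 hx
      _ ≤ ENNReal.ofReal (s + 1 / 2)⁻¹ ^ 2
            * ∫⁻ t in Ioi 0, ENNReal.ofReal (t ^ (2 * (s + 1))) * ‖deriv f t‖ₑ ^ 2 :=
          lintegral_rpow_mul_sq_lintegral_Ioi_le hs (measurable_deriv f).enorm
      _ = ENNReal.ofReal (s + 1 / 2)⁻¹ ^ 2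
            * ∫⁻ t in Ioi (0 : ℝ), ENNReal.ofReal (t ^ (2 * (s + 1)) * ‖deriv f t‖ ^ 2) := by
          congr 1
          exact setLIntegral_congr_fun measurableSet_Ioi fun t ht =>
            (ofReal_mul_norm_sq (Real.rpow_nonneg (le_of_lt ht) _) _).symm
  refine (ENNReal.rpow_le_rpow hsq (by norm_num)).trans_eq ?_
  rw [ENNReal.mul_rpow_of_nonneg _ _ (by norm_num), ← ENNReal.rpow_natCast, ← ENNReal.rpow_mul]
  norm_num

theorem weightedL2Norm_le_prod_mul_weightedL2Norm_iteratedDeriv (n : ℕ) {s : ℝ}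
    (hs : -(1 / 2) < s) {f : ℝ → ℂ} (hf : ContDiffOn ℝ n f (Ioi 0)) (hf0 : f =ᶠ[atTop] 0) :
    weightedL2Norm s f ≤ (∏ j ∈ Finset.range n, ENNReal.ofReal (s + j + 1 / 2)⁻¹)
      * weightedL2Norm (s + n) (iteratedDeriv n f) := by
  induction n generalizing s f with
  | zero => simp
  | succ n ih =>
    have hderiv0 : deriv f =ᶠ[atTop] 0 := by
      simpa using iteratedDeriv_eventuallyEq_zero hf0 1
    calc weightedL2Norm s f
        ≤ ENNReal.ofReal (s + 1 / 2)⁻¹ * weightedL2Norm (s + 1) (deriv f) :=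
          weightedL2Norm_le_mul_weightedL2Norm_deriv hs
            (hf.of_le (by exact_mod_cast Nat.le_add_left 1 n)) hf0
      _ ≤ ENNReal.ofReal (s + 1 / 2)⁻¹
            * ((∏ j ∈ Finset.range n, ENNReal.ofReal (s + 1 + j + 1 / 2)⁻¹)
              * weightedL2Norm (s + 1 + n) (iteratedDeriv n (deriv f))) := by
          gcongr
          exact ih (by linarith) (hf.deriv_of_isOpen isOpen_Ioi (by norm_cast)) hderiv0
      _ = (∏ j ∈ Finset.range (n + 1), ENNReal.ofReal (s + j + 1 / 2)⁻¹)
            * weightedL2Norm (s + (n + 1 : ℕ)) (iteratedDeriv (n + 1) f) := by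
          rw [Finset.prod_range_succ', iteratedDeriv_succ']
          push_cast
          ring_nf

theorem exists_weightedL2Norm_iteratedDeriv_rpow_mul_le (r : ℕ) {q m : ℝ}
    (hm : (r : ℝ) - 1 / 2 < m + q) :
    ∃ C : ℝ≥0, ∀ f : ℝ → ℂ, ContDiffOn ℝ r f (Ioi 0) → f =ᶠ[atTop] 0 →
      weightedL2Norm m (iteratedDeriv r (fun y => ((y ^ q : ℝ) : ℂ) * f y))
        ≤ C * weightedL2Norm (m + q) (iteratedDeriv r f) := by
  set a : ℕ → ℂ := fun i => r.choose i * (descPochhammer ℝ i).eval q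
  set K : ℕ → ℝ≥0∞ := fun i =>
    ∏ j ∈ Finset.range i, ENNReal.ofReal (m + (q - i) + j + 1 / 2)⁻¹
  have hC : ∑ i ∈ Finset.range (r + 1), ‖a i‖ₑ * K i ≠ ⊤ :=
    ENNReal.sum_ne_top.2 fun i _ => ENNReal.mul_ne_top enorm_ne_top
      (ENNReal.prod_ne_top fun _ _ => ENNReal.ofReal_ne_top)
  refine ⟨(∑ i ∈ Finset.range (r + 1), ‖a i‖ₑ * K i).toNNReal, fun f hf hf0 => ?_⟩
  have hterm : ∀ i ∈ Finset.range (r + 1),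
      weightedL2Norm m (fun x => ((x ^ (q - i) : ℝ) : ℂ) * iteratedDeriv (r - i) f x)
        ≤ K i * weightedL2Norm (m + q) (iteratedDeriv r f) := by
    intro i hi
    have hir : i ≤ r := Nat.lt_succ_iff.1 (Finset.mem_range.1 hi)
    have hD : iteratedDeriv i (iteratedDeriv (r - i) f) = iteratedDeriv r f := by
      simp only [iteratedDeriv_eq_iterate, ← Function.iterate_add_apply, Nat.add_sub_cancel' hir]
    rw [weightedL2Norm_rpow_mul]
    have := weightedL2Norm_le_prod_mul_weightedL2Norm_iteratedDeriv i (s := m + (q - i))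
      (by have : (i : ℝ) ≤ r := by exact_mod_cast hir
          linarith)
      (hf.iteratedDeriv_of_isOpen isOpen_Ioi (k := r - i) (m := i) (by omega))
      (iteratedDeriv_eventuallyEq_zero hf0 _)
    rwa [hD, show m + (q - i) + i = m + q by ring] at this
  have hmeas : ∀ i ∈ Finset.range (r + 1), AEStronglyMeasurable
      (a i • fun x => ((x ^ (q - i) : ℝ) : ℂ) * iteratedDeriv (r - i) f x)
      (volume.restrict (Ioi 0)) := fun i _ =>
    (((contDiffOn_ofReal_rpow _ 0).continuousOn.mul
      (hf.iteratedDeriv_of_isOpen isOpen_Ioi (k := r - i) (m := 0) (by omega)).continuousOn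
      ).aestronglyMeasurable measurableSet_Ioi).const_smul _
  rw [ENNReal.coe_toNNReal hC, Finset.sum_mul]
  calc weightedL2Norm m (iteratedDeriv r (fun y => ((y ^ q : ℝ) : ℂ) * f y))
      = weightedL2Norm m (∑ i ∈ Finset.range (r + 1),
          a i • fun x => ((x ^ (q - i) : ℝ) : ℂ) * iteratedDeriv (r - i) f x) :=
        weightedL2Norm_congr m (iteratedDeriv_ofReal_rpow_mul hf q)
    _ ≤ ∑ i ∈ Finset.range (r + 1), ‖a i‖ₑ *
          weightedL2Norm m (fun x => ((x ^ (q - i) : ℝ) : ℂ) * iteratedDeriv (r - i) f x) := by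
        refine (weightedL2Norm_sum_le m _ hmeas).trans_eq ?_
        simp_rw [weightedL2Norm_const_smul]
    _ ≤ ∑ i ∈ Finset.range (r + 1), ‖a i‖ₑ * K i * weightedL2Norm (m + q) (iteratedDeriv r f) := by
        refine Finset.sum_le_sum fun i hi => ?_
        rw [mul_assoc]
        gcongr
        exact hterm i hi

theorem exists_weightedL2Norm_iteratedDeriv_le_rpow_mul (r : ℕ) {p m : ℝ}
    (hm : (r : ℝ) - 1 / 2 < m) :
    ∃ C : ℝ≥0, ∀ f : ℝ → ℂ, ContDiffOn ℝ r f (Ioi 0) → f =ᶠ[atTop] 0 →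
      weightedL2Norm (m + p) (iteratedDeriv r f)
        ≤ C * weightedL2Norm m (iteratedDeriv r (fun y => ((y ^ p : ℝ) : ℂ) * f y)) := by
  obtain ⟨C, hC⟩ := exists_weightedL2Norm_iteratedDeriv_rpow_mul_le r (q := -p) (m := m + p)
    (by linarith)
  refine ⟨C, fun f hf hf0 => ?_⟩
  set u : ℝ → ℂ := fun y => ((y ^ p : ℝ) : ℂ) * f y
  have hu : ContDiffOn ℝ r u (Ioi 0) := (contDiffOn_ofReal_rpow p r).mul hf
  have hu0 : u =ᶠ[atTop] 0 := hf0.mono fun x hx => by simp [u, hx]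
  have hback : EqOn (fun y => ((y ^ (-p) : ℝ) : ℂ) * u y) f (Ioi 0) := fun y hy => by
    simp only [u, ← mul_assoc, ← Complex.ofReal_mul, ← Real.rpow_add hy, neg_add_cancel,
      Real.rpow_zero, Complex.ofReal_one, one_mul]
  simpa only [weightedL2Norm_congr _ (hback.iteratedDeriv_of_isOpen isOpen_Ioi r),
    add_neg_cancel_right] using hC u hu hu0

theorem exists_one_le_ofReal_inv_mul_le_and_le_ofReal_mul (A B : ℝ≥0) :
    ∃ C : ℝ, 1 ≤ C ∧ ∀ a b : ℝ≥0∞, a ≤ A * b → b ≤ B * a →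
      ENNReal.ofReal C⁻¹ * a ≤ b ∧ b ≤ ENNReal.ofReal C * a := by
  have hA : (A : ℝ≥0∞) ≤ ENNReal.ofReal (1 + A + B) := by
    rw [← ENNReal.ofReal_coe_nnreal]; gcongr; linarith [B.2]
  have hB : (B : ℝ≥0∞) ≤ ENNReal.ofReal (1 + A + B) := by
    rw [← ENNReal.ofReal_coe_nnreal]; gcongr; linarith [A.2]
  refine ⟨1 + A + B, by linarith [A.2, B.2], fun a b hab hba => ⟨?_, hba.trans (by gcongr)⟩⟩
  calc ENNReal.ofReal (1 + A + B)⁻¹ * a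
      ≤ ENNReal.ofReal (1 + A + B)⁻¹ * (ENNReal.ofReal (1 + A + B) * b) := by
        gcongr; exact hab.trans (by gcongr)
    _ = b := by
        rw [← mul_assoc, ← ENNReal.ofReal_mul (by positivity), inv_mul_cancel₀ (by positivity),
          ENNReal.ofReal_one, one_mul]

/-- Lemma 2.4(b): equivalence of the weighted norms `‖x^{m+p} h^{(r)}‖` and
`‖x^m (x^p h)^{(r)}‖` on the half line. -/
theorem weighted_norm_equivalence
    (r : ℕ) (p m : ℝ) (hp : 0 ≤ p) (hm : (r : ℝ) - 1/2 < m) :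
    ∃ C : ℝ, 1 ≤ C ∧
      ∀ h : ℝ → ℂ, ContDiffOn ℝ (r : ℕ∞) h (Set.Ioi 0) →
        (∃ ρ : ℝ, ∀ x, ρ ≤ x → h x = 0) →
        (ENNReal.ofReal C⁻¹ *
            (∫⁻ x in Set.Ioi (0:ℝ),
              ENNReal.ofReal (x ^ (2*m) *
                ‖iteratedDerivWithin r (fun y => ((y ^ p : ℝ) : ℂ) * h y) (Set.Ioi 0) x‖^2))
              ^ (1/2 : ℝ)
          ≤ (∫⁻ x in Set.Ioi (0:ℝ),
              ENNReal.ofReal (x ^ (2*(m+p)) *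
                ‖iteratedDerivWithin r h (Set.Ioi 0) x‖^2)) ^ (1/2 : ℝ)) ∧
        ((∫⁻ x in Set.Ioi (0:ℝ),
              ENNReal.ofReal (x ^ (2*(m+p)) *
                ‖iteratedDerivWithin r h (Set.Ioi 0) x‖^2)) ^ (1/2 : ℝ)
          ≤ ENNReal.ofReal C *
            (∫⁻ x in Set.Ioi (0:ℝ),
              ENNReal.ofReal (x ^ (2*m) *
                ‖iteratedDerivWithin r (fun y => ((y ^ p : ℝ) : ℂ) * h y) (Set.Ioi 0) x‖^2))
              ^ (1/2 : ℝ)) := by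
  obtain ⟨A, hA⟩ := exists_weightedL2Norm_iteratedDeriv_rpow_mul_le r (q := p) (m := m)
    (by linarith)
  obtain ⟨B, hB⟩ := exists_weightedL2Norm_iteratedDeriv_le_rpow_mul r (p := p) hm
  obtain ⟨C, hC1, hC⟩ := exists_one_le_ofReal_inv_mul_le_and_le_ofReal_mul A B
  refine ⟨C, hC1, fun h hh hvan => ?_⟩
  have hh0 : h =ᶠ[atTop] 0 := eventually_atTop.2 hvan
  simp only [← weightedL2Norm_eq_lintegral,
    weightedL2Norm_congr _ (iteratedDerivWithin_of_isOpen isOpen_Ioi)]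
  exact hC _ _ (hA h hh hh0) (hB h hh hh0)
end

section
/- Let n ≥ p ≥ 0 be real numbers with n ≥ 1. There exists a constant C depending only on n such that for every function h : (0,∞) → ℂ that is continuously differentiable on (0,∞) and vanishes for all sufficiently large x, one has ‖x^p h‖ ≤ C (‖x^n h‖ + ‖h'‖), the inequality being understood in [0,∞]. -/
/-!
On `(0, 1]` the weight `x ^ (2p)` is at most `1`, and on `(1, ∞)` it is at most `x ^ (2n)`, so
only `sup_{(0,1]} |h|` needs control. By the fundamental theorem of calculus and Cauchy–Schwarz on
intervals of length at most one, `|h x| ≤ |h y| + 2 ‖h'‖` for `x ∈ (0, 1]` and `y ∈ [1, 2]`;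
averaging over `y` and using `x ^ (2n) ≥ 1` on `[1, 2]` gives `|h x| ≤ ‖x^n h‖ + 2 ‖h'‖`, whence
`C = 2`.
-/

open MeasureTheory Set
open scoped ENNReal

theorem lintegral_le_rpow_lintegral_sq {α : Type*} [MeasurableSpace α] {μ : Measure α}
    {f : α → ℝ≥0∞} (hf : AEMeasurable f μ) (hμ : μ univ ≤ 1) :
    ∫⁻ x, f x ∂μ ≤ (∫⁻ x, f x ^ 2 ∂μ) ^ (1 / 2 : ℝ) := by
  have holder := ENNReal.lintegral_mul_le_Lp_mul_Lq μ Real.HolderConjugate.two_two hf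
    aemeasurable_const (g := 1)
  simp only [Pi.mul_apply, Pi.one_apply, mul_one, one_pow, lintegral_const, one_mul,
    ENNReal.rpow_two] at holder
  calc ∫⁻ x, f x ∂μ ≤ _ := holder
    _ ≤ (∫⁻ x, f x ^ 2 ∂μ) ^ (1 / 2 : ℝ) * 1 := by
        gcongr; exact ENNReal.rpow_le_one hμ (by norm_num)
    _ = _ := mul_one _

theorem edist_le_lintegral_derivWithin_of_Icc_subset {E : Type*} [NormedAddCommGroup E]
    [NormedSpace ℝ E] {f : ℝ → E} {U : Set ℝ} {a b : ℝ} (hf : ContDiffOn ℝ 1 f U)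
    (hU : IsOpen U) (hab : a ≤ b) (hsub : Icc a b ⊆ U) :
    edist (f a) (f b) ≤ ∫⁻ x in Icc a b, ‖derivWithin f U x‖ₑ := by
  rw [edist_comm, edist_eq_enorm_sub]
  refine (enorm_sub_le_lintegral_deriv_of_contDiffOn_Icc (hf.mono hsub) hab).trans_eq ?_
  refine setLIntegral_congr_fun measurableSet_Icc fun x hx => ?_
  rw [derivWithin_of_isOpen hU (hsub hx)]

theorem enorm_le_on_Ioc_zero_one_of_contDiffOn_Ioi {E : Type*} [NormedAddCommGroup E]
    [NormedSpace ℝ E] {h : ℝ → E} (hh : ContDiffOn ℝ 1 h (Ioi 0)) {x : ℝ} (hx : x ∈ Ioc 0 1) :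
    ‖h x‖ₑ ≤ (∫⁻ y in Icc 1 2, ‖h y‖ₑ ^ 2) ^ (1 / 2 : ℝ)
      + 2 * (∫⁻ y in Ioi 0, ‖derivWithin h (Ioi 0) y‖ₑ ^ 2) ^ (1 / 2 : ℝ) := by
  set D := (∫⁻ y in Ioi 0, ‖derivWithin h (Ioi 0) y‖ₑ ^ 2) ^ (1 / 2 : ℝ)
  have unit_volume {a b : ℝ} (hab : b ≤ a + 1) : volume.restrict (Icc a b) univ ≤ 1 := by
    rw [Measure.restrict_apply_univ, Real.volume_Icc, ← ENNReal.ofReal_one]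
    exact ENNReal.ofReal_le_ofReal (by linarith)
  have edist_le_of_le_add_one {a b : ℝ} (ha : 0 < a) (hab : a ≤ b) (hba : b ≤ a + 1) :
      edist (h a) (h b) ≤ D := by
    have hsub : Icc a b ⊆ Ioi 0 := fun t ht => ha.trans_le ht.1
    have hderiv : ContinuousOn (derivWithin h (Ioi 0)) (Icc a b) :=
      (hh.continuousOn_derivWithin isOpen_Ioi.uniqueDiffOn le_rfl).mono hsub
    calc edist (h a) (h b) ≤ ∫⁻ y in Icc a b, ‖derivWithin h (Ioi 0) y‖ₑ :=
          edist_le_lintegral_derivWithin_of_Icc_subset hh isOpen_Ioi hab hsub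
      _ ≤ (∫⁻ y in Icc a b, ‖derivWithin h (Ioi 0) y‖ₑ ^ 2) ^ (1 / 2 : ℝ) :=
          lintegral_le_rpow_lintegral_sq
            (hderiv.enorm.aemeasurable measurableSet_Icc) (unit_volume hba)
      _ ≤ D := ENNReal.rpow_le_rpow (lintegral_mono_set hsub) (by norm_num)
  have via_one : ∀ y ∈ Icc (1 : ℝ) 2, ‖h x‖ₑ ≤ ‖h y‖ₑ + 2 * D := fun y hy =>
    calc ‖h x‖ₑ = edist (h x) 0 := (edist_zero_right _).symm
      _ ≤ edist (h x) (h 1) + edist (h 1) (h y) + edist (h y) 0 := edist_triangle4 _ _ _ _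
      _ ≤ D + D + ‖h y‖ₑ :=
          add_le_add (add_le_add (edist_le_of_le_add_one hx.1 hx.2 (by linarith [hx.1]))
            (edist_le_of_le_add_one one_pos hy.1 (by linarith [hy.2]))) (edist_zero_right _).le
      _ = ‖h y‖ₑ + 2 * D := by ring
  calc ‖h x‖ₑ = ∫⁻ _ in Icc (1 : ℝ) 2, ‖h x‖ₑ := by norm_num
    _ ≤ ∫⁻ y in Icc (1 : ℝ) 2, (‖h y‖ₑ + 2 * D) := setLIntegral_mono' measurableSet_Icc via_one
    _ = (∫⁻ y in Icc (1 : ℝ) 2, ‖h y‖ₑ) + 2 * D := by norm_num [lintegral_add_right]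
    _ ≤ _ := by
        gcongr
        exact lintegral_le_rpow_lintegral_sq
          ((hh.continuousOn.mono fun t ht => one_pos.trans_le ht.1).enorm.aemeasurable
            measurableSet_Icc) (unit_volume (by norm_num))

theorem lintegral_rpow_mul_sq_le {E : Type*} [NormedAddCommGroup E] (h : ℝ → E) {p n : ℝ}
    (hp : 0 ≤ p) (hpn : p ≤ n) :
    ∫⁻ x in Ioi 0, ENNReal.ofReal (x ^ (2 * p) * ‖h x‖ ^ 2)
      ≤ (∫⁻ x in Ioc 0 1, ‖h x‖ₑ ^ 2)
        + ∫⁻ x in Ioi 0, ENNReal.ofReal (x ^ (2 * n) * ‖h x‖ ^ 2) := by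
  set W := ∫⁻ x in Ioi 0, ENNReal.ofReal (x ^ (2 * n) * ‖h x‖ ^ 2)
  calc ∫⁻ x in Ioi 0, ENNReal.ofReal (x ^ (2 * p) * ‖h x‖ ^ 2)
      = (∫⁻ x in Ioc 0 1, ENNReal.ofReal (x ^ (2 * p) * ‖h x‖ ^ 2))
        + ∫⁻ x in Ioi 1, ENNReal.ofReal (x ^ (2 * p) * ‖h x‖ ^ 2) := by
        rw [← lintegral_union measurableSet_Ioi (Ioc_disjoint_Ioi le_rfl),
          Ioc_union_Ioi_eq_Ioi zero_le_one]
    _ ≤ (∫⁻ x in Ioc 0 1, ‖h x‖ₑ ^ 2) + W := by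
      refine add_le_add (setLIntegral_mono' measurableSet_Ioc fun x hx => ?_) ?_
      · rw [← ofReal_norm, ← ENNReal.ofReal_pow (norm_nonneg _)]
        exact ENNReal.ofReal_le_ofReal (mul_le_of_le_one_left (by positivity)
          (Real.rpow_le_one hx.1.le hx.2 (by positivity)))
      refine (setLIntegral_mono' measurableSet_Ioi fun x hx => ?_).trans
        (lintegral_mono_set (Ioi_subset_Ioi zero_le_one))
      exact ENNReal.ofReal_le_ofReal (mul_le_mul_of_nonneg_right
        (Real.rpow_le_rpow_of_exponent_le (le_of_lt hx) (by linarith)) (by positivity))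

theorem lintegral_Icc_one_two_enorm_sq_le {E : Type*} [NormedAddCommGroup E] (h : ℝ → E)
    {n : ℝ} (hn : 0 ≤ n) :
    ∫⁻ x in Icc 1 2, ‖h x‖ₑ ^ 2 ≤ ∫⁻ x in Ioi 0, ENNReal.ofReal (x ^ (2 * n) * ‖h x‖ ^ 2) := by
  calc ∫⁻ x in Icc 1 2, ‖h x‖ₑ ^ 2
      ≤ ∫⁻ x in Icc 1 2, ENNReal.ofReal (x ^ (2 * n) * ‖h x‖ ^ 2) := by
        refine setLIntegral_mono' measurableSet_Icc fun x hx => ?_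
        rw [← ofReal_norm, ← ENNReal.ofReal_pow (norm_nonneg _)]
        exact ENNReal.ofReal_le_ofReal
          (le_mul_of_one_le_left (by positivity) (Real.one_le_rpow hx.1 (by positivity)))
    _ ≤ _ := lintegral_mono_set fun x hx => one_pos.trans_le hx.1

theorem weighted_interpolation_inequality_general
    (n p : ℝ) (hpn : p ≤ n) (hp : 0 ≤ p) :
    ∃ C : ℝ, 0 < C ∧
      ∀ h : ℝ → ℂ, ContDiffOn ℝ 1 h (Set.Ioi 0) →
        (∃ ρ : ℝ, ∀ x, ρ ≤ x → h x = 0) →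
        (∫⁻ x in Set.Ioi (0:ℝ),
            ENNReal.ofReal (x ^ (2*p) * ‖h x‖^2)) ^ (1/2 : ℝ)
          ≤ ENNReal.ofReal C *
            ((∫⁻ x in Set.Ioi (0:ℝ),
                ENNReal.ofReal (x ^ (2*n) * ‖h x‖^2)) ^ (1/2 : ℝ)
             + (∫⁻ x in Set.Ioi (0:ℝ),
                ENNReal.ofReal (‖derivWithin h (Set.Ioi 0) x‖^2)) ^ (1/2 : ℝ)) := by
  refine ⟨2, two_pos, fun h hh _ => ?_⟩
  set A := ∫⁻ x in Ioi 0, ENNReal.ofReal (x ^ (2 * n) * ‖h x‖ ^ 2)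
  set B := ∫⁻ x in Ioi 0, ENNReal.ofReal (‖derivWithin h (Ioi 0) x‖ ^ 2)
  set M := A ^ (1 / 2 : ℝ) + 2 * B ^ (1 / 2 : ℝ)
  have hB : B = ∫⁻ x in Ioi 0, ‖derivWithin h (Ioi 0) x‖ₑ ^ 2 := by
    simp only [B, ENNReal.ofReal_pow (norm_nonneg _), ofReal_norm]
  have sup_bound (x : ℝ) (hx : x ∈ Ioc 0 1) : ‖h x‖ₑ ≤ M := by
    refine (enorm_le_on_Ioc_zero_one_of_contDiffOn_Ioi hh hx).trans ?_
    rw [← hB]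
    exact add_le_add (ENNReal.rpow_le_rpow
      (lintegral_Icc_one_two_enorm_sq_le h (hp.trans hpn)) (by norm_num)) le_rfl
  have near_zero : ∫⁻ x in Ioc 0 1, ‖h x‖ₑ ^ 2 ≤ M ^ 2 :=
    calc ∫⁻ x in Ioc 0 1, ‖h x‖ₑ ^ 2 ≤ ∫⁻ _ in Ioc (0 : ℝ) 1, M ^ 2 :=
          setLIntegral_mono' measurableSet_Ioc fun x hx => by gcongr; exact sup_bound x hx
      _ = M ^ 2 := by norm_num
  calc (∫⁻ x in Ioi 0, ENNReal.ofReal (x ^ (2 * p) * ‖h x‖ ^ 2)) ^ (1 / 2 : ℝ)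
      ≤ (M ^ 2 + A) ^ (1 / 2 : ℝ) := by
        gcongr
        exact (lintegral_rpow_mul_sq_le h hp hpn).trans (add_le_add near_zero le_rfl)
    _ ≤ (M ^ 2) ^ (1 / 2 : ℝ) + A ^ (1 / 2 : ℝ) :=
        ENNReal.rpow_add_le_add_rpow _ _ (by norm_num) (by norm_num)
    _ = ENNReal.ofReal 2 * (A ^ (1 / 2 : ℝ) + B ^ (1 / 2 : ℝ)) := by
        rw [← ENNReal.rpow_natCast, ← ENNReal.rpow_mul, ENNReal.ofReal_ofNat]
        norm_num only [ENNReal.rpow_one]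
        ring

/-- Lemma 2.4(c): `‖x^p h‖ ≤ C (‖x^n h‖ + ‖h'‖)` on the half line. -/
theorem weighted_interpolation_inequality
    (n p : ℝ) (hpn : p ≤ n) (hp : 0 ≤ p) (hn : 1 ≤ n) :
    ∃ C : ℝ, 0 < C ∧
      ∀ h : ℝ → ℂ, ContDiffOn ℝ 1 h (Set.Ioi 0) →
        (∃ ρ : ℝ, ∀ x, ρ ≤ x → h x = 0) →
        (∫⁻ x in Set.Ioi (0:ℝ),
            ENNReal.ofReal (x ^ (2*p) * ‖h x‖^2)) ^ (1/2 : ℝ)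
          ≤ ENNReal.ofReal C *
            ((∫⁻ x in Set.Ioi (0:ℝ),
                ENNReal.ofReal (x ^ (2*n) * ‖h x‖^2)) ^ (1/2 : ℝ)
             + (∫⁻ x in Set.Ioi (0:ℝ),
                ENNReal.ofReal (‖derivWithin h (Set.Ioi 0) x‖^2)) ^ (1/2 : ℝ)) :=
  weighted_interpolation_inequality_general n p hpn hp
end

section
/- Let u : ℝ → ℂ be continuously differentiable with ∫_ℝ |u'(x)|² dx < ∞, and let h ≠ 0. Then ∫_ℝ |∇ₕu(x)|² dx ≤ ∫_ℝ |u'(x)|² dx. -/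
open MeasureTheory Set
open scoped ENNReal

/-!
Write `u (x + h) - u (x - h) = ∫_{-h}^{h} u' (x + s) ds`. Cauchy–Schwarz on `[-h, h]` bounds its
squared norm by `2|h| ∫_{-h}^{h} |u' (x + s)|² ds`; integrating in `x` and using Tonelli and
translation invariance of Lebesgue measure bounds `∫ |u (x + h) - u (x - h)|² dx` by
`(2h)² ∫ |u'|²`.
-/

theorem sq_lintegral_le_measure_univ_mul_lintegral_sq {α : Type*} [MeasurableSpace α]
    {μ : Measure α} {g : α → ℝ≥0∞} (hg : AEMeasurable g μ) :
    (∫⁻ a, g a ∂μ) ^ 2 ≤ μ univ * ∫⁻ a, g a ^ 2 ∂μ := by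
  have holder := ENNReal.lintegral_mul_norm_pow_le (hg.pow_const 2) (aemeasurable_const (b := 1))
    (p := (2 : ℕ)⁻¹) (q := (2 : ℕ)⁻¹) (by positivity) (by positivity) (by norm_num)
  simp only [ENNReal.pow_rpow_inv_natCast two_ne_zero, ENNReal.one_rpow, mul_one,
    lintegral_const, one_mul] at holder
  calc (∫⁻ a, g a ∂μ) ^ 2
      ≤ ((∫⁻ a, g a ^ 2 ∂μ) ^ ((2 : ℕ)⁻¹ : ℝ) * μ univ ^ ((2 : ℕ)⁻¹ : ℝ)) ^ 2 := by gcongr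
    _ = μ univ * ∫⁻ a, g a ^ 2 ∂μ := by
      rw [mul_pow, ENNReal.rpow_inv_natCast_pow two_ne_zero,
        ENNReal.rpow_inv_natCast_pow two_ne_zero, mul_comm]

theorem lintegral_lintegral_comp_add {G : Type*} [MeasurableSpace G] [AddGroup G]
    [MeasurableAdd₂ G] {μ ν : Measure G} [SFinite μ] [SFinite ν] [μ.IsAddRightInvariant]
    {f : G → ℝ≥0∞} (hf : Measurable f) :
    ∫⁻ x, ∫⁻ s, f (x + s) ∂ν ∂μ = ν univ * ∫⁻ x, f x ∂μ := by
  rw [lintegral_lintegral_swap (f := fun x s ↦ f (x + s)) (hf.comp measurable_add).aemeasurable]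
  simp_rw [lintegral_add_right_eq_self f, lintegral_const, mul_comm]

section
variable {E : Type*} [NormedAddCommGroup E] [NormedSpace ℝ E] {u : ℝ → E}

theorem enorm_sub_comp_add_le_lintegral_deriv (hu : ContDiff ℝ 1 u) {a b : ℝ} (hab : a ≤ b)
    (x : ℝ) : ‖u (x + b) - u (x + a)‖ₑ ≤ ∫⁻ s in Icc a b, ‖deriv u (x + s)‖ₑ := by
  simpa only [deriv_comp_const_add] using
    enorm_sub_le_lintegral_deriv_of_contDiffOn_Icc
      (hu.comp (contDiff_const.add contDiff_id)).contDiffOn hab (f := fun s ↦ u (x + s))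

theorem ContDiff.measurable_enorm_deriv (hu : ContDiff ℝ 1 u) : Measurable fun x ↦ ‖deriv u x‖ₑ :=
  (hu.continuous_deriv le_rfl).enorm.measurable

theorem enorm_sub_comp_add_sq_le (hu : ContDiff ℝ 1 u) {a b : ℝ} (hab : a ≤ b) (x : ℝ) :
    ‖u (x + b) - u (x + a)‖ₑ ^ 2
      ≤ ENNReal.ofReal (b - a) * ∫⁻ s in Icc a b, ‖deriv u (x + s)‖ₑ ^ 2 := by
  calc ‖u (x + b) - u (x + a)‖ₑ ^ 2 ≤ (∫⁻ s in Icc a b, ‖deriv u (x + s)‖ₑ) ^ 2 := by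
        gcongr; exact enorm_sub_comp_add_le_lintegral_deriv hu hab x
    _ ≤ _ := by
        simpa only [Measure.restrict_apply_univ, Real.volume_Icc, Function.comp_apply] using
          sq_lintegral_le_measure_univ_mul_lintegral_sq (μ := volume.restrict (Icc a b))
            (hu.measurable_enorm_deriv.comp (measurable_const_add x)).aemeasurable

theorem lintegral_enorm_sub_comp_add_sq_le (hu : ContDiff ℝ 1 u) (a b : ℝ) :
    ∫⁻ x, ‖u (x + b) - u (x + a)‖ₑ ^ 2 ≤ ‖b - a‖ₑ ^ 2 * ∫⁻ x, ‖deriv u x‖ₑ ^ 2 := by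
  wlog hab : a ≤ b generalizing a b
  · simpa only [enorm_sub_rev] using this b a (le_of_not_ge hab)
  calc ∫⁻ x, ‖u (x + b) - u (x + a)‖ₑ ^ 2
      ≤ ∫⁻ x, ENNReal.ofReal (b - a) * ∫⁻ s in Icc a b, ‖deriv u (x + s)‖ₑ ^ 2 :=
        lintegral_mono (enorm_sub_comp_add_sq_le hu hab)
    _ = ‖b - a‖ₑ ^ 2 * ∫⁻ x, ‖deriv u x‖ₑ ^ 2 := by
        rw [lintegral_const_mul' _ _ ENNReal.ofReal_ne_top,
          lintegral_lintegral_comp_add (f := fun t ↦ ‖deriv u t‖ₑ ^ 2)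
            (hu.measurable_enorm_deriv.pow_const 2),
          Measure.restrict_apply_univ, Real.volume_Icc, ← mul_assoc, ← sq,
          Real.enorm_of_nonneg (sub_nonneg.mpr hab)]

end

theorem difference_quotient_L2_bound_general
    (u : ℝ → ℂ) (hu : ContDiff ℝ 1 u)
    (h : ℝ) (hh : h ≠ 0) :
    ∫⁻ x : ℝ, ENNReal.ofReal (‖(u (x + h) - u (x - h)) / (2 * (h : ℂ))‖^2)
      ≤ ∫⁻ x : ℝ, ENNReal.ofReal (‖deriv u x‖^2) := by
  set c : ℂ := 2 * h
  have hc : c ≠ 0 := by simp [c, hh]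
  have hc_sq : ‖c‖ₑ ^ 2 ≠ 0 := pow_ne_zero _ (enorm_ne_zero.mpr hc)
  simp_rw [ENNReal.ofReal_pow (norm_nonneg _), ofReal_norm, div_eq_mul_inv, enorm_mul,
    enorm_inv hc, mul_pow, ← ENNReal.inv_pow]
  calc ∫⁻ x, ‖u (x + h) - u (x - h)‖ₑ ^ 2 * (‖c‖ₑ ^ 2)⁻¹
      = (∫⁻ x, ‖u (x + h) - u (x + -h)‖ₑ ^ 2) * (‖c‖ₑ ^ 2)⁻¹ := by
        simp only [← sub_eq_add_neg]
        exact lintegral_mul_const' _ _ (ENNReal.inv_ne_top.mpr hc_sq)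
    _ ≤ ‖c‖ₑ ^ 2 * (∫⁻ x, ‖deriv u x‖ₑ ^ 2) * (‖c‖ₑ ^ 2)⁻¹ := by
        have hnorm : ‖h - -h‖ₑ = ‖c‖ₑ := by
          rw [sub_neg_eq_add, ← two_mul]
          simp only [c, ← ofReal_norm, ← Complex.ofReal_ofNat, ← Complex.ofReal_mul,
            Complex.norm_real]
        gcongr
        exact (lintegral_enorm_sub_comp_add_sq_le hu (-h) h).trans_eq (by rw [hnorm])
    _ = ∫⁻ x, ‖deriv u x‖ₑ ^ 2 := by
        rw [mul_right_comm, ENNReal.mul_inv_cancel hc_sq (by simp), one_mul]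

/-- Lemma 4.1 (norm bound): `‖∇ₕ u‖_{L²} ≤ ‖u'‖_{L²}`. -/
theorem difference_quotient_L2_bound
    (u : ℝ → ℂ) (hu : ContDiff ℝ 1 u)
    (hfin : (∫⁻ x : ℝ, ENNReal.ofReal (‖deriv u x‖^2)) < ⊤)
    (h : ℝ) (hh : h ≠ 0) :
    ∫⁻ x : ℝ, ENNReal.ofReal (‖(u (x + h) - u (x - h)) / (2 * (h : ℂ))‖^2)
      ≤ ∫⁻ x : ℝ, ENNReal.ofReal (‖deriv u x‖^2) :=
  difference_quotient_L2_bound_general u hu h hh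
end

section
/- Let u : ℝ → ℂ be continuously differentiable with ∫_ℝ |u'(x)|² dx < ∞. Then ∇ₕu converges to u' strongly in L²(ℝ) as h → 0, i.e. lim_{h→0, h≠0} ∫_ℝ |∇ₕu(x) − u'(x)|² dx = 0. -/
/-!
By the fundamental theorem of calculus, `∇ₕu(x) - u'(x)` is the average of `u'(x + s) - u'(x)`
over `s ∈ (-h, h]`. Cauchy–Schwarz and Tonelli then bound `‖∇ₕu - u'‖²_{L²}` by the average over
`s ∈ (-h, h]` of `‖u'(· + s) - u'‖²_{L²}`, which tends to `0` with `h` because translation is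
continuous on `L²`. As `∇₋ₕ = ∇ₕ`, it suffices to let `h → 0⁺`.
-/

open MeasureTheory Set Filter Topology
open scoped ENNReal

theorem eLpNorm_two_sq {α E : Type*} [MeasurableSpace α] [NormedAddCommGroup E]
    (μ : Measure α) (f : α → E) :
    eLpNorm f 2 μ ^ 2 = ∫⁻ x, ‖f x‖ₑ ^ 2 ∂μ := by
  rw [eLpNorm_eq_lintegral_rpow_enorm_toReal two_ne_zero ENNReal.ofNat_ne_top,
    ← ENNReal.rpow_natCast, ← ENNReal.rpow_mul]
  norm_num

theorem enorm_integral_sq_le {α E : Type*} [MeasurableSpace α] [NormedAddCommGroup E]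
    [NormedSpace ℝ E] (μ : Measure α) {f : α → E} (hf : AEStronglyMeasurable f μ) :
    ‖∫ x, f x ∂μ‖ₑ ^ 2 ≤ μ univ * ∫⁻ x, ‖f x‖ₑ ^ 2 ∂μ := by
  have hL1 : ‖∫ x, f x ∂μ‖ₑ ≤ eLpNorm f 2 μ * μ univ ^ (1 / 2 : ℝ) := by
    calc ‖∫ x, f x ∂μ‖ₑ ≤ eLpNorm f 1 μ :=
          (enorm_integral_le_lintegral_enorm f).trans_eq eLpNorm_one_eq_lintegral_enorm.symm
      _ ≤ _ := by
          convert eLpNorm_le_eLpNorm_mul_rpow_measure_univ (p := 1) (q := 2) (by norm_num) hf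
            using 3
          norm_num
  calc ‖∫ x, f x ∂μ‖ₑ ^ 2 ≤ (eLpNorm f 2 μ * μ univ ^ (1 / 2 : ℝ)) ^ 2 := by gcongr
    _ = μ univ * ∫⁻ x, ‖f x‖ₑ ^ 2 ∂μ := by
      rw [mul_pow, eLpNorm_two_sq, ← ENNReal.rpow_natCast (_ ^ _), ← ENNReal.rpow_mul]
      norm_num
      ring

theorem tendsto_eLpNorm_comp_add_right_sub {G E : Type*} [TopologicalSpace G] [AddGroup G]
    [IsTopologicalAddGroup G] [MeasurableSpace G] [BorelSpace G] [MeasurableAdd G]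
    [NormedAddCommGroup E] (μ : Measure G) [μ.IsAddRightInvariant] [μ.InnerRegularCompactLTTop]
    [IsLocallyFiniteMeasure μ] {p : ℝ≥0∞} [Fact (1 ≤ p)] (hp : p ≠ ∞) {g : G → E}
    (hg : MemLp g p μ) :
    Tendsto (fun s => eLpNorm (fun x => g (x + s) - g x) p μ) (𝓝 0) (𝓝 0) := by
  let shift : G → C(G, G) := fun s => ⟨(· + s), continuous_add_const s⟩
  have hshift : Continuous shift :=
    ContinuousMap.continuous_of_continuous_uncurry _ (continuous_snd.add continuous_fst)
  have hmp (s : G) : MeasurePreserving (shift s) μ μ := measurePreserving_add_right μ s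
  let T : G → Lp E p μ := fun s => Lp.compMeasurePreserving (shift s) (hmp s) (hg.toLp g)
  have hT : Tendsto T (𝓝 0) (𝓝 (T 0)) :=
    (continuous_const.compMeasurePreservingLp hshift hmp hp).tendsto 0
  have hT_eq (s : G) : eLpNorm (fun x => g (x + s) - g x) p μ = edist (T s) (T 0) := by
    rw [Lp.edist_def]
    refine eLpNorm_congr_ae ?_
    have h_comp (s : G) : ⇑(T s) =ᵐ[μ] fun x => g (x + s) :=
      (Lp.coeFn_compMeasurePreserving _ (hmp s)).trans
        ((hmp s).quasiMeasurePreserving.ae_eq hg.coeFn_toLp)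
    filter_upwards [h_comp s, h_comp 0] with x hs h0
    simp [hs, h0]
  simpa only [hT_eq] using tendsto_iff_edist_tendsto_0.mp hT

theorem volume_Ioc_neg_self (h : ℝ) : volume (Ioc (-h) h) = ENNReal.ofReal (2 * h) := by
  rw [Real.volume_Ioc, sub_neg_eq_add, two_mul]

theorem tendsto_setLAverage_Ioc_neg_self {φ : ℝ → ℝ≥0∞} (hφ : Tendsto φ (𝓝 0) (𝓝 0)) :
    Tendsto (fun h => ⨍⁻ s in Ioc (-h) h, φ s ∂volume) (𝓝[>] 0) (𝓝 0) := by
  rw [ENNReal.tendsto_nhds_zero] at hφ ⊢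
  intro ε hε
  obtain ⟨δ, hδ, hφδ⟩ := Metric.eventually_nhds_iff.mp (hφ ε hε)
  filter_upwards [Ioo_mem_nhdsGT hδ] with h ⟨hh, hhδ⟩
  have hvol := volume_Ioc_neg_self h
  calc ⨍⁻ s in Ioc (-h) h, φ s ∂volume ≤ ⨍⁻ _ in Ioc (-h) h, ε ∂volume := by
        refine laverage_mono_ae ((ae_restrict_iff' measurableSet_Ioc).mpr (.of_forall ?_))
        intro s hs
        exact hφδ (by rw [Real.dist_0_eq_abs, abs_lt]; constructor <;> linarith [hs.1, hs.2])
    _ = ε := setLAverage_const (by simp [hvol, hh]) (hvol ▸ ENNReal.ofReal_ne_top) ε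

section SymmDiffQuot

variable {E : Type*} [NormedAddCommGroup E] [NormedSpace ℝ E]

noncomputable def symmDiffQuot (u : ℝ → E) (h x : ℝ) : E :=
  (2 * h)⁻¹ • (u (x + h) - u (x - h))

theorem symmDiffQuot_neg (u : ℝ → E) (h : ℝ) : symmDiffQuot u (-h) = symmDiffQuot u h := by
  ext x
  rw [symmDiffQuot, symmDiffQuot, mul_neg, inv_neg, neg_smul, ← smul_neg, neg_sub,
    sub_neg_eq_add, ← sub_eq_add_neg]

theorem symmDiffQuot_abs (u : ℝ → E) (h : ℝ) : symmDiffQuot u |h| = symmDiffQuot u h := by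
  rcases abs_choice h with h_abs | h_abs <;> rw [h_abs]
  exact symmDiffQuot_neg u h

theorem symmDiffQuot_sub_eq_smul_integral [CompleteSpace E] {u g : ℝ → E}
    (hu : ∀ x, HasDerivAt u (g x) x) (hg : Continuous g) {h : ℝ} (hh : h ≠ 0) (x : ℝ) :
    symmDiffQuot u h x - g x = (2 * h)⁻¹ • ∫ s in -h..h, (g (x + s) - g x) := by
  have hftc : ∫ s in -h..h, g (x + s) = u (x + h) - u (x - h) := by
    rw [intervalIntegral.integral_comp_add_left, ← sub_eq_add_neg]
    exact intervalIntegral.integral_eq_sub_of_hasDerivAt (fun t _ => hu t)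
      (hg.intervalIntegrable _ _)
  have hint : IntervalIntegrable (fun s => g (x + s)) volume (-h) h :=
    (hg.comp (continuous_const_add x)).intervalIntegrable _ _
  rw [intervalIntegral.integral_sub hint intervalIntegrable_const, hftc,
    intervalIntegral.integral_const, smul_sub (2 * h)⁻¹, symmDiffQuot, sub_neg_eq_add, ← two_mul,
    inv_smul_smul₀ (mul_ne_zero two_ne_zero hh)]

theorem enorm_symmDiffQuot_sub_sq_le [CompleteSpace E] {u g : ℝ → E}
    (hu : ∀ x, HasDerivAt u (g x) x) (hg : Continuous g) {h : ℝ} (hh : 0 < h) (x : ℝ) :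
    ‖symmDiffQuot u h x - g x‖ₑ ^ 2 ≤ ⨍⁻ s in Ioc (-h) h, ‖g (x + s) - g x‖ₑ ^ 2 ∂volume := by
  have hvol := volume_Ioc_neg_self h
  have hvol_ne : ENNReal.ofReal (2 * h) ≠ 0 := by simp [hh]
  rw [symmDiffQuot_sub_eq_smul_integral hu hg hh.ne',
    intervalIntegral.integral_of_le (neg_le_self hh.le), enorm_smul, setLAverage_eq, hvol,
    ← ofReal_norm, norm_inv, Real.norm_of_nonneg (by positivity),
    ENNReal.ofReal_inv_of_pos (by positivity), mul_pow, ENNReal.div_eq_inv_mul]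
  calc (ENNReal.ofReal (2 * h))⁻¹ ^ 2 * ‖∫ s in Ioc (-h) h, (g (x + s) - g x)‖ₑ ^ 2
      ≤ (ENNReal.ofReal (2 * h))⁻¹ ^ 2 *
          (ENNReal.ofReal (2 * h) * ∫⁻ s in Ioc (-h) h, ‖g (x + s) - g x‖ₑ ^ 2) := by
        gcongr
        have hmeas : AEStronglyMeasurable (fun s => g (x + s) - g x)
            (volume.restrict (Ioc (-h) h)) :=
          ((hg.comp (continuous_const_add x)).sub continuous_const).aestronglyMeasurable
        simpa only [Measure.restrict_apply_univ, hvol] using enorm_integral_sq_le _ hmeas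
    _ = (ENNReal.ofReal (2 * h))⁻¹ * ∫⁻ s in Ioc (-h) h, ‖g (x + s) - g x‖ₑ ^ 2 := by
        rw [sq, mul_assoc, ← mul_assoc _ (ENNReal.ofReal _),
          ENNReal.inv_mul_cancel hvol_ne ENNReal.ofReal_ne_top, one_mul]

theorem lintegral_enorm_symmDiffQuot_sub_sq_le [CompleteSpace E] {u g : ℝ → E}
    (hu : ∀ x, HasDerivAt u (g x) x) (hg : Continuous g) {h : ℝ} (hh : 0 < h) :
    ∫⁻ x, ‖symmDiffQuot u h x - g x‖ₑ ^ 2 ≤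
      ⨍⁻ s in Ioc (-h) h, (∫⁻ x, ‖g (x + s) - g x‖ₑ ^ 2) ∂volume := by
  have hK : Measurable fun p : ℝ × ℝ => ‖g (p.1 + p.2) - g p.1‖ₑ ^ 2 :=
    ((hg.comp continuous_add).sub (hg.comp continuous_fst)).enorm.measurable.pow_const 2
  calc ∫⁻ x, ‖symmDiffQuot u h x - g x‖ₑ ^ 2
      ≤ ∫⁻ x, ⨍⁻ s in Ioc (-h) h, ‖g (x + s) - g x‖ₑ ^ 2 ∂volume :=
        lintegral_mono (enorm_symmDiffQuot_sub_sq_le hu hg hh)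
    _ = ⨍⁻ s in Ioc (-h) h, (∫⁻ x, ‖g (x + s) - g x‖ₑ ^ 2) ∂volume := by
        simp only [laverage_eq']
        exact lintegral_lintegral_swap hK.aemeasurable

theorem tendsto_lintegral_enorm_symmDiffQuot_sub_sq [CompleteSpace E] {u g : ℝ → E}
    (hu : ∀ x, HasDerivAt u (g x) x) (hg : Continuous g) (hg₂ : MemLp g 2) :
    Tendsto (fun h => ∫⁻ x, ‖symmDiffQuot u h x - g x‖ₑ ^ 2) (𝓝[≠] 0) (𝓝 0) := by
  have htranslate : Tendsto (fun s => ∫⁻ x, ‖g (x + s) - g x‖ₑ ^ 2) (𝓝 0) (𝓝 0) := by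
    have hsq : Tendsto (fun a : ℝ≥0∞ => a ^ 2) (𝓝 0) (𝓝 0) := by
      simpa using (ENNReal.continuous_pow 2).tendsto 0
    simpa only [Function.comp_def, eLpNorm_two_sq] using
      hsq.comp (tendsto_eLpNorm_comp_add_right_sub volume ENNReal.ofNat_ne_top hg₂)
  have hpos : Tendsto (fun h => ∫⁻ x, ‖symmDiffQuot u h x - g x‖ₑ ^ 2) (𝓝[>] 0) (𝓝 0) :=
    tendsto_of_tendsto_of_tendsto_of_le_of_le' tendsto_const_nhds
      (tendsto_setLAverage_Ioc_neg_self htranslate) (.of_forall fun _ => zero_le)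
      (eventually_nhdsWithin_of_forall fun _ hh =>
        lintegral_enorm_symmDiffQuot_sub_sq_le hu hg hh)
  refine (hpos.comp (tendsto_norm_nhdsNE_zero (E := ℝ))).congr fun h => ?_
  simp only [Function.comp_apply, Real.norm_eq_abs, symmDiffQuot_abs]

end SymmDiffQuot

/-- Lemma 4.1 (convergence): `∇ₕ u → u'` strongly in `L²(ℝ)` as `h → 0`. -/
theorem difference_quotient_L2_convergence
    (u : ℝ → ℂ) (hu : ContDiff ℝ 1 u)
    (hfin : (∫⁻ x : ℝ, ENNReal.ofReal (‖deriv u x‖^2)) < ⊤) :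
    Filter.Tendsto
      (fun h : ℝ => ∫⁻ x : ℝ,
        ENNReal.ofReal (‖(u (x + h) - u (x - h)) / (2 * (h : ℂ)) - deriv u x‖^2))
      (nhdsWithin 0 {(0:ℝ)}ᶜ) (nhds (0 : ENNReal)) := by
  have h_enorm (v : ℂ) : ENNReal.ofReal (‖v‖ ^ 2) = ‖v‖ₑ ^ 2 := by
    rw [ENNReal.ofReal_pow (norm_nonneg v), ofReal_norm]
  have h_quot (h x : ℝ) : (u (x + h) - u (x - h)) / (2 * (h : ℂ)) = symmDiffQuot u h x := by
    rw [symmDiffQuot, Complex.real_smul, div_eq_inv_mul]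
    push_cast
    rfl
  have hg : Continuous (deriv u) := hu.continuous_deriv le_rfl
  have hg₂ : MemLp (deriv u) 2 := by
    refine ⟨hg.aestronglyMeasurable, ?_⟩
    have hsq : eLpNorm (deriv u) 2 volume ^ 2 < ∞ := by
      simpa only [eLpNorm_two_sq, h_enorm] using hfin
    simpa using hsq
  simpa only [h_enorm, h_quot] using tendsto_lintegral_enorm_symmDiffQuot_sub_sq
    (fun x => (hu.differentiable one_ne_zero x).hasDerivAt) hg hg₂
end

section
/- Let κ ∈ (0,1), let d and d₁ be positive integers, let a be a real symmetric d×d matrix and σ a real d×d₁ matrix such that for all x ∈ ℝ^d: κ‖x‖² + ‖σᵀx‖² ≤ 2⟨ax, x⟩ and ‖σᵀx‖² ≤ κ^{-1}‖x‖². Then there exists μ > 0 depending only on κ such that for all w ∈ ℂ^d and z ∈ ℂ^{d₁}: 2 ∑_{j,l} a_{jl} \overline{w_j} w_l + ‖z‖² − 2 Re ∑_{j,k} σ_{jk} \overline{w_j} z_k ≥ μ κ² (‖w‖² + ‖z‖²). -/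
/-!
Completing the square with `s = σᵀw` writes the form as `(2⟨aw, w⟩ - ‖s‖²) + ‖s - z‖²`. The first
summand is at least `κ‖w‖²`, and `‖z‖² ≤ 2‖s‖² + 2‖s - z‖² ≤ 2κ⁻¹‖w‖² + 2‖s - z‖²`, which gives
the bound with `μ = 1/4` for `κ ≤ 1`. The real hypotheses pass to complex vectors by applying them
to the real and imaginary parts, since a real matrix acts on both separately.
-/

open Finset ComplexConjugate

section CompletingSquare

variable {𝕜 F : Type*} [RCLike 𝕜] [NormedAddCommGroup F] [InnerProductSpace 𝕜 F]

theorem le_add_norm_sq_sub_two_mul_re_inner {κ A Q : ℝ} (hκ0 : 0 < κ) (hκ1 : κ ≤ 1) (s y : F)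
    (hQ : κ * A + ‖s‖ ^ 2 ≤ Q) (hs : ‖s‖ ^ 2 ≤ κ⁻¹ * A) :
    κ ^ 2 / 4 * (A + ‖y‖ ^ 2) ≤ Q + ‖y‖ ^ 2 - 2 * RCLike.re (inner 𝕜 s y) := by
  have hsA : κ * ‖s‖ ^ 2 ≤ A := by
    rwa [le_inv_mul_iff₀ hκ0] at hs
  have hA : 0 ≤ A := le_trans (by positivity) hsA
  have hsquare := norm_sub_sq (𝕜 := 𝕜) s y
  have hy : ‖y‖ ^ 2 ≤ 2 * (‖s‖ ^ 2 + ‖s - y‖ ^ 2) := by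
    calc ‖y‖ ^ 2 ≤ (‖s‖ + ‖s - y‖) ^ 2 := by
          gcongr; simpa using norm_sub_le s (s - y)
      _ ≤ _ := add_sq_le
  nlinarith [mul_le_mul_of_nonneg_left hy (by positivity : 0 ≤ κ ^ 2),
    mul_le_mul_of_nonneg_left hκ1 hA, sq_nonneg ‖s - y‖, mul_le_mul_of_nonneg_left hκ1 hκ0.le]

end CompletingSquare

section Complexification

variable {m n : Type*} [Fintype m] [Fintype n]

theorem sum_sq_norm_eq_sum_re_sq_add_sum_im_sq (v : n → ℂ) :
    ∑ k, ‖v k‖ ^ 2 = ∑ k, (v k).re ^ 2 + ∑ k, (v k).im ^ 2 := by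
  rw [← sum_add_distrib]
  exact sum_congr rfl fun k _ => by rw [Complex.sq_norm, Complex.normSq_apply]; ring

theorem re_sum_ofReal_mul_conj_mul (M : Matrix m n ℝ) (u : m → ℂ) (v : n → ℂ) :
    (∑ j, ∑ k, (M j k : ℂ) * conj (u j) * v k).re =
      ∑ j, ∑ k, M j k * (u j).re * (v k).re + ∑ j, ∑ k, M j k * (u j).im * (v k).im := by
  simp only [Complex.re_sum, ← sum_add_distrib, Complex.mul_re, Complex.mul_im,
    Complex.conj_re, Complex.conj_im, Complex.ofReal_re, Complex.ofReal_im]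
  exact sum_congr rfl fun _ _ => sum_congr rfl fun _ _ => by ring

theorem sum_sq_norm_vecMul_eq (σ : Matrix m n ℝ) (w : m → ℂ) :
    ∑ k, ‖∑ j, (σ j k : ℂ) * w j‖ ^ 2 =
      ∑ k, (∑ j, σ j k * (w j).re) ^ 2 + ∑ k, (∑ j, σ j k * (w j).im) ^ 2 := by
  simp [sum_sq_norm_eq_sum_re_sq_add_sum_im_sq, Complex.re_sum, Complex.im_sum]

theorem re_sum_ofReal_mul_conj_mul_eq_re_inner (σ : Matrix m n ℝ) (w : m → ℂ) (z : n → ℂ) :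
    (∑ j, ∑ k, (σ j k : ℂ) * conj (w j) * z k).re =
      (inner ℂ (WithLp.toLp 2 fun k => ∑ j, (σ j k : ℂ) * w j) (WithLp.toLp 2 z)).re := by
  rw [EuclideanSpace.inner_toLp_toLp, dotProduct, sum_comm]
  simp [mul_sum, mul_comm, mul_left_comm]

variable {κ : ℝ} (σ : Matrix m n ℝ) (w : m → ℂ)

theorem ellipticity_complex_of_real (a : Matrix m m ℝ)
    (h : ∀ x : m → ℝ, κ * (∑ j, (x j) ^ 2) + (∑ k, (∑ j, σ j k * x j) ^ 2)
      ≤ 2 * ∑ j, ∑ l, a j l * x j * x l) :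
    κ * ∑ j, ‖w j‖ ^ 2 + ∑ k, ‖∑ j, (σ j k : ℂ) * w j‖ ^ 2 ≤
      (2 * ∑ j, ∑ l, (a j l : ℂ) * conj (w j) * w l).re := by
  have hre := h fun j => (w j).re
  have him := h fun j => (w j).im
  simp only [Complex.mul_re, Complex.re_ofNat, Complex.im_ofNat, zero_mul, sub_zero,
    re_sum_ofReal_mul_conj_mul, sum_sq_norm_vecMul_eq, sum_sq_norm_eq_sum_re_sq_add_sum_im_sq]
  linarith

theorem sum_sq_norm_vecMul_le_of_real
    (h : ∀ x : m → ℝ, (∑ k, (∑ j, σ j k * x j) ^ 2) ≤ κ⁻¹ * ∑ j, (x j) ^ 2) :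
    ∑ k, ‖∑ j, (σ j k : ℂ) * w j‖ ^ 2 ≤ κ⁻¹ * ∑ j, ‖w j‖ ^ 2 := by
  have hre := h fun j => (w j).re
  have him := h fun j => (w j).im
  rw [sum_sq_norm_vecMul_eq, sum_sq_norm_eq_sum_re_sq_add_sum_im_sq]
  linarith

end Complexification

/-- Step 3 of the proof of Theorem 5.1: coercivity of the Hermitian quadratic form
`2⟨aw,w⟩ + ‖z‖² − 2 Re⟨σᵀw, z⟩` under the super-parabolicity conditions. -/
theorem hermitian_form_coercivity (κ : ℝ) (hκ : κ ∈ Set.Ioo (0:ℝ) 1) :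
    ∃ μ : ℝ, 0 < μ ∧
      ∀ (d d₁ : ℕ), 0 < d → 0 < d₁ →
        ∀ (a : Matrix (Fin d) (Fin d) ℝ) (σ : Matrix (Fin d) (Fin d₁) ℝ),
          a.IsSymm →
          (∀ x : Fin d → ℝ,
            κ * (∑ j, (x j)^2) + (∑ k, (∑ j, σ j k * x j)^2)
              ≤ 2 * ∑ j, ∑ l, a j l * x j * x l) →
          (∀ x : Fin d → ℝ,
            (∑ k, (∑ j, σ j k * x j)^2) ≤ κ⁻¹ * ∑ j, (x j)^2) →
          ∀ (w : Fin d → ℂ) (z : Fin d₁ → ℂ),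
            μ * κ^2 * ((∑ j, ‖w j‖^2) + ∑ k, ‖z k‖^2)
              ≤ (2 * ∑ j, ∑ l, (a j l : ℂ) * starRingEnd ℂ (w j) * w l).re
                + (∑ k, ‖z k‖^2)
                - 2 * (∑ j, ∑ k, (σ j k : ℂ) * starRingEnd ℂ (w j) * z k).re := by
  refine ⟨1 / 4, by norm_num, fun d d₁ _ _ a σ _ hlower hupper w z => ?_⟩
  let s : EuclideanSpace ℂ (Fin d₁) := WithLp.toLp 2 fun k => ∑ j, (σ j k : ℂ) * w j
  have hs : ‖s‖ ^ 2 = ∑ k, ‖∑ j, (σ j k : ℂ) * w j‖ ^ 2 := EuclideanSpace.norm_sq_eq s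
  have hz : ‖WithLp.toLp 2 z‖ ^ 2 = ∑ k, ‖z k‖ ^ 2 := EuclideanSpace.norm_sq_eq _
  have key := le_add_norm_sq_sub_two_mul_re_inner (𝕜 := ℂ) hκ.1 hκ.2.le s (WithLp.toLp 2 z)
    (hs ▸ ellipticity_complex_of_real σ w a hlower)
    (hs ▸ sum_sq_norm_vecMul_le_of_real σ w hupper)
  rw [hz, RCLike.re_to_complex] at key
  rw [re_sum_ofReal_mul_conj_mul_eq_re_inner]
  linarith
end
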